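/- arXiv:2312.16481 — 10 statements merged into one kernel-verified Lean document; each statement's English description precedes it below -/
import Mathlib

section
/- Let A be a unital C*-algebra, G a compact Hausdorff topological group, and α : G → Aut(A) an action of G on A by *-automorphisms such that for every a ∈ A the map g ↦ α_g(a) is norm-continuous. Let H be a complex Hilbert space, π : A → B(H) a unital *-homomorphism, and U a strongly continuous unitary representation of G on H satisfying the covariance condition U_g π(a) U_g* = π(α_g(a)) for all a ∈ A and g ∈ G. If the restriction of π to the fixed-point subalgebra A^G = {a ∈ A : α_g(a) = a for all g ∈ G} is injective, then π is injective. -/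
/-!
Average over a Haar measure `μ` of the compact group `G`. If `π a = 0`, then `b = a⋆ * a`
satisfies `π (α g b) = U g * π b * (U g)⋆ = 0` for all `g`, so the average `∫ α g b ∂μ` is a
`G`-invariant element killed by `π`, hence zero by injectivity of `π` on `A^G`. Averaging is
faithful on positive elements: `g ↦ α g b` is continuous and positive, so a vanishing integral
forces it to vanish at every point, in particular `b = 0`, and so `a = 0`.
-/

open MeasureTheory

open scoped CStarAlgebra

/-- On the open set `V` where `F` is within `‖F x₀‖ / 2` of `F x₀`, positivity forces
`∫ x in V, F x ∂μ = 0`, whereas this integral is within `μ V * ‖F x₀‖ / 2` of `μ V • F x₀`. -/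
theorem Continuous.eq_zero_of_nonneg_of_integral_eq_zero {X A : Type*} [TopologicalSpace X]
    [MeasurableSpace X] {μ : Measure X} [IsFiniteMeasure μ] [μ.IsOpenPosMeasure]
    [CStarAlgebra A] [PartialOrder A] [StarOrderedRing A] {F : X → A} (hF : Continuous F)
    (hFi : Integrable F μ) (hF_nonneg : 0 ≤ F) (h : ∫ x, F x ∂μ = 0) (x₀ : X) : F x₀ = 0 := by
  by_contra hne
  have h_norm_pos : 0 < ‖F x₀‖ := norm_pos_iff.mpr hne
  set V := F ⁻¹' Metric.ball (F x₀) (‖F x₀‖ / 2)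
  have hV_pos : 0 < μ.real V :=
    ENNReal.toReal_pos (IsOpen.measure_ne_zero μ (Metric.isOpen_ball.preimage hF)
      ⟨x₀, by simpa [V] using h_norm_pos⟩) (measure_ne_top μ V)
  have hV_int : ∫ x in V, F x ∂μ = 0 :=
    le_antisymm (h ▸ integral_mono_measure Measure.restrict_le_self
      (ae_of_all _ hF_nonneg) hFi) (integral_nonneg hF_nonneg)
  have h_eq : μ.real V • F x₀ = ∫ x in V, (F x₀ - F x) ∂μ := by
    rw [integral_sub (integrable_const _) hFi.integrableOn, hV_int, setIntegral_const, sub_zero]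
  have h_le : μ.real V * ‖F x₀‖ ≤ ‖F x₀‖ / 2 * μ.real V := by
    rw [← norm_smul_of_nonneg hV_pos.le, h_eq]
    refine norm_setIntegral_le_of_norm_le_const (measure_lt_top μ V) fun x hx => ?_
    rw [← dist_eq_norm, dist_comm]
    exact hx.le
  nlinarith [mul_pos hV_pos h_norm_pos]

theorem ContinuousLinearMapClass.map_integral {X 𝕜 E F L : Type*} [MeasurableSpace X]
    {μ : Measure X} [RCLike 𝕜] [NormedAddCommGroup E] [NormedSpace 𝕜 E] [NormedSpace ℝ E]
    [CompleteSpace E] [NormedAddCommGroup F] [NormedSpace 𝕜 F] [NormedSpace ℝ F]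
    [CompleteSpace F] [FunLike L E F] [ContinuousLinearMapClass L 𝕜 E F] (ℓ : L) {f : X → E}
    (hf : Integrable f μ) : ℓ (∫ x, f x ∂μ) = ∫ x, ℓ (f x) ∂μ :=
  (ContinuousLinearMap.integral_comp_comm ⟨(ℓ : E →ₗ[𝕜] F), map_continuous ℓ⟩ hf).symm

theorem apply_integral_orbit_eq_self {G A : Type*} [Group G] [MeasurableSpace G]
    [MeasurableMul G] {μ : Measure G} [μ.IsMulLeftInvariant] [CStarAlgebra A]
    (α : G → A ≃⋆ₐ[ℂ] A) (h_mul : ∀ g h : G, ∀ a : A, α (g * h) a = α g (α h a)) {a : A}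
    (ha : Integrable (fun g => α g a) μ) (h : G) :
    α h (∫ g, α g a ∂μ) = ∫ g, α g a ∂μ := by
  rw [ContinuousLinearMapClass.map_integral (𝕜 := ℂ) (α h) ha]
  simp_rw [← h_mul]
  exact integral_mul_left_eq_self (fun g => α g a) h

theorem covariant_representation_faithful_general
    {G : Type*} [Group G] [TopologicalSpace G] [IsTopologicalGroup G]
    [CompactSpace G]
    {A : Type*} [NormedRing A] [StarRing A] [CStarRing A] [NormedAlgebra ℂ A]
    [StarModule ℂ A] [CompleteSpace A]
    (α : G → (A ≃⋆ₐ[ℂ] A))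
    (h_mul : ∀ g h : G, ∀ a : A, α (g * h) a = α g (α h a))
    (h_cont : ∀ a : A, Continuous (fun g : G => α g a))
    {H : Type*} [NormedAddCommGroup H] [InnerProductSpace ℂ H] [CompleteSpace H]
    (π : A →⋆ₐ[ℂ] (H →L[ℂ] H))
    (U : G → (H →L[ℂ] H))
    (h_cov : ∀ (g : G) (a : A), U g * π a * star (U g) = π (α g a))
    (h_inj : ∀ a b : A, (∀ g : G, α g a = a) → (∀ g : G, α g b = b) →
      π a = π b → a = b) :
    Function.Injective π := by
  let _ : CStarAlgebra A := {}
  let _ : PartialOrder A := CStarAlgebra.spectralOrder A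
  let _ : StarOrderedRing A := CStarAlgebra.spectralOrderedRing A
  borelize G
  let μ : Measure G := Measure.haar
  refine (injective_iff_map_eq_zero π).mpr fun a ha => ?_
  rw [← CStarRing.star_mul_self_eq_zero_iff]
  set b := star a * a
  have hπb : π b = 0 := by simp [b, ha]
  have h_orbit_int : Integrable (fun g => α g b) μ :=
    (h_cont b).integrable_of_hasCompactSupport (HasCompactSupport.of_compactSpace _)
  have h_avg : ∫ g, α g b ∂μ = 0 := by
    refine h_inj _ 0 (apply_integral_orbit_eq_self α h_mul h_orbit_int) (fun g => map_zero _) ?_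
    rw [ContinuousLinearMapClass.map_integral (𝕜 := ℂ) π h_orbit_int, map_zero]
    simp [← h_cov, hπb]
  have h_orbit_one : α 1 b = 0 :=
    (h_cont b).eq_zero_of_nonneg_of_integral_eq_zero h_orbit_int
      (fun g => map_nonneg (α g) (star_mul_self_nonneg a)) h_avg 1
  exact (α 1).injective (h_orbit_one.trans (map_zero _).symm)

/-- Let `A` be a unital C*-algebra, `G` a compact Hausdorff topological
group, and `α` a strongly continuous action of `G` on `A` by *-automorphisms. Let `H` be a
complex Hilbert space, `π : A → B(H)` a unital *-homomorphism and `U` a strongly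
continuous unitary representation of `G` on `H` satisfying the covariance condition
`U g * π a * (U g)* = π (α g a)`. If the restriction of `π` to the fixed-point subalgebra
`A^G` is injective, then `π` is injective. -/
theorem covariant_representation_faithful
    {G : Type*} [Group G] [TopologicalSpace G] [IsTopologicalGroup G]
    [CompactSpace G] [T2Space G]
    {A : Type*} [NormedRing A] [StarRing A] [CStarRing A] [NormedAlgebra ℂ A]
    [StarModule ℂ A] [CompleteSpace A]
    (α : G → (A ≃⋆ₐ[ℂ] A))
    (h_one : ∀ a : A, α 1 a = a)
    (h_mul : ∀ g h : G, ∀ a : A, α (g * h) a = α g (α h a))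
    (h_cont : ∀ a : A, Continuous (fun g : G => α g a))
    {H : Type*} [NormedAddCommGroup H] [InnerProductSpace ℂ H] [CompleteSpace H]
    (π : A →⋆ₐ[ℂ] (H →L[ℂ] H))
    (U : G → (H →L[ℂ] H))
    (hU_unitary : ∀ g : G, U g ∈ unitary (H →L[ℂ] H))
    (hU_one : U 1 = 1)
    (hU_mul : ∀ g h : G, U (g * h) = U g * U h)
    (hU_cont : ∀ w : H, Continuous (fun g : G => U g w))
    (h_cov : ∀ (g : G) (a : A), U g * π a * star (U g) = π (α g a))
    (h_inj : ∀ a b : A, (∀ g : G, α g a = a) → (∀ g : G, α g b = b) →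
      π a = π b → a = b) :
    Function.Injective π :=
  covariant_representation_faithful_general α h_mul h_cont π U h_cov h_inj
end

section
/- Let A be a unital complex *-algebra and z₀, …, zₙ ∈ A elements satisfying the q-sphere relations with q = 0, i.e., z_i z_j = 0 for all i > j; z_i* z_j = 0 for all i ≠ j; z_i* z_i = ∑_{j=i}^{n} z_j z_j* for all i; and ∑_{j=0}^{n} z_j z_j* = 1. Then each z_i is a partial isometry (z_i z_i* z_i = z_i), and the elements z_i z_i* (0 ≤ i ≤ n) are mutually orthogonal self-adjoint idempotents, i.e., (z_i z_i*)* = z_i z_i*, (z_i z_i*)² = z_i z_i*, and (z_i z_i*)(z_j z_j*) = 0 for i ≠ j, whose sum equals 1. -/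
open Finset

/-- If `z 0, …, z n` are elements of a unital complex *-algebra
satisfying the `q`-sphere relations with `q = 0`, then each `z i` is a partial isometry
and the elements `z i * (z i)*` are mutually orthogonal self-adjoint idempotents summing
to `1`. -/
theorem qSphere_zero_partialIsometries_and_projections
    {A : Type*} [Ring A] [StarRing A] [Algebra ℂ A] [StarModule ℂ A]
    {n : ℕ} (z : Fin (n + 1) → A)
    (rel1 : ∀ i j : Fin (n + 1), j < i → z i * z j = 0)
    (rel2 : ∀ i j : Fin (n + 1), i ≠ j → star (z i) * z j = 0)
    (rel3 : ∀ i : Fin (n + 1), star (z i) * z i = ∑ j ∈ Finset.Ici i, z j * star (z j))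
    (rel4 : ∑ j : Fin (n + 1), z j * star (z j) = 1) :
    (∀ i : Fin (n + 1), z i * star (z i) * z i = z i) ∧
    (∀ i : Fin (n + 1), star (z i * star (z i)) = z i * star (z i)) ∧
    (∀ i : Fin (n + 1), (z i * star (z i)) ^ 2 = z i * star (z i)) ∧
    (∀ i j : Fin (n + 1), i ≠ j → (z i * star (z i)) * (z j * star (z j)) = 0) ∧
    (∑ i : Fin (n + 1), z i * star (z i) = 1) := by
  have key : ∀ i : Fin (n + 1), z i * star (z i) * z i = z i := by
    intro i
    have h1 : z i * star (z i) * z i = ∑ j ∈ Finset.Ici i, z i * (z j * star (z j)) := by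
      rw [mul_assoc, rel3, Finset.mul_sum]
    have h2 : z i = ∑ j ∈ Finset.Ici i, z i * (z j * star (z j)) := by
      calc z i = z i * 1 := (mul_one _).symm
        _ = ∑ j : Fin (n + 1), z i * (z j * star (z j)) := by rw [← rel4, Finset.mul_sum]
        _ = ∑ j ∈ Finset.Ici i, z i * (z j * star (z j)) := by
            refine (Finset.sum_subset (Finset.subset_univ _) ?_).symm
            intro j _ hj
            have hji : j < i := lt_of_not_ge (by simpa [Finset.mem_Ici] using hj)
            rw [← mul_assoc, rel1 i j hji, zero_mul]
    rw [h1, ← h2]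
  refine ⟨key, ?_, ?_, ?_, rel4⟩
  · intro i; rw [star_mul, star_star]
  · intro i
    rw [sq, mul_assoc, ← mul_assoc (z i), ← mul_assoc, key]
  · intro i j hij
    rw [mul_assoc, ← mul_assoc (star (z i)), rel2 i j hij, zero_mul, mul_zero]
end

section
/- Let q be a real number with 0 ≤ q < 1 and let z₀, …, zₙ be elements of a unital complex *-algebra A satisfying the q-sphere relations. Then for every 0 ≤ i ≤ n and every positive integer m: z_i* (z_i)^m = q^{2m} (z_i)^m z_i* + (1 − q^{2m}) (z_i)^{m−1} (1 − ∑_{j=0}^{i−1} z_j z_j*), where the sum over j is empty (equal to 0) when i = 0. -/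
open Finset

/-- If `0 ≤ q < 1` and `z 0, …, z n` are elements of a unital complex
*-algebra satisfying the `q`-sphere relations, then for every `i` and every positive
integer `m`:
`(z i)* (z i)^m = q^{2m} (z i)^m (z i)* + (1 − q^{2m}) (z i)^{m−1} (1 − ∑_{j<i} z j (z j)*)`. -/
theorem qSphere_rel_m
    {A : Type*} [Ring A] [StarRing A] [Algebra ℂ A] [StarModule ℂ A]
    {n : ℕ} (q : ℝ) (hq0 : 0 ≤ q) (hq1 : q < 1) (z : Fin (n + 1) → A)
    (rel1 : ∀ i j : Fin (n + 1), i < j → z j * z i = (q : ℂ) • (z i * z j))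
    (rel2 : ∀ i j : Fin (n + 1), i ≠ j → star (z i) * z j = (q : ℂ) • (z j * star (z i)))
    (rel3 : ∀ i : Fin (n + 1), star (z i) * z i =
      z i * star (z i) + ((1 - q ^ 2 : ℝ) : ℂ) • ∑ j ∈ Finset.Ioi i, z j * star (z j))
    (rel4 : ∑ j : Fin (n + 1), z j * star (z j) = 1) :
    ∀ (i : Fin (n + 1)) (m : ℕ), 1 ≤ m →
      star (z i) * (z i) ^ m =
        ((q ^ (2 * m) : ℝ) : ℂ) • ((z i) ^ m * star (z i)) +
        ((1 - q ^ (2 * m) : ℝ) : ℂ) •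
          ((z i) ^ (m - 1) * (1 - ∑ j ∈ Finset.Iio i, z j * star (z j))) := by
  intro i
  set S : A := 1 - ∑ j ∈ Finset.Iio i, z j * star (z j) with hS
  -- z i commutes with S
  have hcomm : z i * S = S * z i := by
    have hsum : z i * (∑ j ∈ Finset.Iio i, z j * star (z j)) =
        (∑ j ∈ Finset.Iio i, z j * star (z j)) * z i := by
      rw [Finset.mul_sum, Finset.sum_mul]
      refine Finset.sum_congr rfl fun j hj => ?_
      have hji : j < i := Finset.mem_Iio.mp hj
      have h1 := rel1 j i hji
      have h2 := rel2 j i (ne_of_lt hji)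
      calc z i * (z j * star (z j)) = (z i * z j) * star (z j) := by rw [mul_assoc]
        _ = ((q : ℂ) • (z j * z i)) * star (z j) := by rw [h1]
        _ = (q : ℂ) • (z j * (z i * star (z j))) := by rw [smul_mul_assoc, mul_assoc]
        _ = z j * ((q : ℂ) • (z i * star (z j))) := by rw [mul_smul_comm]
        _ = z j * (star (z j) * z i) := by rw [h2]
        _ = z j * star (z j) * z i := by rw [mul_assoc]
    simp only [hS, mul_sub, sub_mul, mul_one, one_mul, hsum]
  have hSstar : star S = S := by
    simp only [hS, star_sub, star_one, star_sum, star_mul, star_star]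
  have hcomm' : star (z i) * S = S * star (z i) := by
    have := congrArg star hcomm
    simpa [star_mul, hSstar] using this.symm
  -- improved relation 3
  have hsplit : ∑ j ∈ Finset.Ioi i, z j * star (z j) = S - z i * star (z i) := by
    have h1 : ∑ j ∈ Finset.Ici i, z j * star (z j) =
        z i * star (z i) + ∑ j ∈ Finset.Ioi i, z j * star (z j) := by
      rw [← Finset.Ioi_insert, Finset.sum_insert (by simp)]
    have h2 : Finset.Iio i ∪ Finset.Ici i = Finset.univ := by
      ext a; simp [lt_or_ge]
    have h3 : Disjoint (Finset.Iio i) (Finset.Ici i) := by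
      simp [Finset.disjoint_left]
    have h4 : ∑ j ∈ Finset.Iio i, z j * star (z j) +
        ∑ j ∈ Finset.Ici i, z j * star (z j) = 1 := by
      rw [← Finset.sum_union h3, h2, rel4]
    rw [h1] at h4
    rw [hS]
    linear_combination (norm := abel) h4
  have rel3' : star (z i) * z i =
      ((q ^ 2 : ℝ) : ℂ) • (z i * star (z i)) + ((1 - q ^ 2 : ℝ) : ℂ) • S := by
    rw [rel3 i, hsplit]
    push_cast
    module
  -- commuting S past powers handled directly; induction on m
  intro m hm
  induction m with
  | zero => omega
  | succ m ih =>
    rcases Nat.eq_or_lt_of_le hm with h1 | h1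
    · -- m + 1 = 1
      have hm0 : m = 0 := by omega
      subst hm0
      simpa using rel3'
    · have hm1 : 1 ≤ m := by omega
      have IH := ih hm1
      have hz : z i ^ (m - 1) * z i = z i ^ m := by
        conv_rhs => rw [show m = (m - 1) + 1 by omega]
        rw [pow_succ]
      calc star (z i) * z i ^ (m + 1)
          = (star (z i) * z i ^ m) * z i := by rw [pow_succ, mul_assoc]
        _ = (((q ^ (2 * m) : ℝ) : ℂ) • (z i ^ m * star (z i)) +
              ((1 - q ^ (2 * m) : ℝ) : ℂ) • (z i ^ (m - 1) * S)) * z i := by rw [IH]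
        _ = ((q ^ (2 * m) : ℝ) : ℂ) • (z i ^ m * (star (z i) * z i)) +
              ((1 - q ^ (2 * m) : ℝ) : ℂ) • (z i ^ (m - 1) * (S * z i)) := by
            rw [add_mul, smul_mul_assoc, smul_mul_assoc, mul_assoc, mul_assoc]
        _ = ((q ^ (2 * m) : ℝ) : ℂ) • (z i ^ m *
              (((q ^ 2 : ℝ) : ℂ) • (z i * star (z i)) + ((1 - q ^ 2 : ℝ) : ℂ) • S)) +
              ((1 - q ^ (2 * m) : ℝ) : ℂ) • (z i ^ m * S) := by
            rw [rel3', ← hcomm, ← mul_assoc, hz]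
        _ = ((q ^ (2 * (m + 1)) : ℝ) : ℂ) • (z i ^ (m + 1) * star (z i)) +
              ((1 - q ^ (2 * (m + 1)) : ℝ) : ℂ) • (z i ^ (m + 1 - 1) * S) := by
            rw [mul_add, mul_smul_comm, mul_smul_comm, ← mul_assoc, ← pow_succ]
            simp only [Nat.add_sub_cancel]
            push_cast [pow_succ, pow_mul]
            module
end

section
/- Let q be a real number with 0 ≤ q < 1 and let z₀, …, zₙ be elements of a unital complex *-algebra A satisfying the q-sphere relations. For i = (i₀, …, iₙ) ∈ ℕⁿ × ℤ and j = (j₀, …, j_{n−1}) ∈ ℕⁿ, define the monomial ⟨i, j⟩ := z₀^{i₀} ⋯ z_{n−1}^{i_{n−1}} zₙ^{iₙ} (z₀^{j₀} ⋯ z_{n−1}^{j_{n−1}})* if iₙ ≥ 0, and ⟨i, j⟩ := z₀^{i₀} ⋯ z_{n−1}^{i_{n−1}} (zₙ*)^{−iₙ} (z₀^{j₀} ⋯ z_{n−1}^{j_{n−1}})* if iₙ < 0. Then the ℂ-linear span of the set {⟨i, j⟩ : i ∈ ℕⁿ × ℤ, j ∈ ℕⁿ} equals the unital subalgebra of A generated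 by {z₀, …, zₙ, z₀*, …, zₙ*}. -/
/-!
The span `S` of the monomials obviously lies in the algebra; conversely `1 ∈ S`, so it suffices
that `S` is stable under left multiplication by every `zᵢ` and `zᵢ*`. Write the monomials as
`b T c*` with `b, c` in the algebra `B` generated by `z₀, …, zₙ₋₁`, which is spanned by the
ordered monomials because `zₗ zₖ = q zₖ zₗ`, and `T` a power of `zₙ` or of `zₙ*`.

* `zₖ B ⊆ B` for `k < n`.
* `zₙ` q-commutes past `B` and then hits `T`; there `zₙ zₙ* = zₙ* zₙ = 1 - ∑_{k<n} zₖ zₖ*` turns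
  `zₙ (zₙ*)^(p+1)` into `(zₙ*)^p - q^p ∑ₖ zₖ (zₙ*)^p zₖ*`, and the new factors `zₖ`, `zₖ*` are
  absorbed into `b` and `c*`.
* `zₖ* zᵢ` is a combination of the `zⱼ zₗ*`, so `zₖ*` can be pushed through `b` one letter at a
  time, using stability under the `zⱼ`, until it meets `T c*`, which is treated as above.
-/

section Algebra

variable {R A : Type*} [CommSemiring R] [Semiring A] [Algebra R A]

theorem mul_pow_eq_smul_pow_mul {a b : A} {c : R} (h : b * a = c • (a * b)) (p : ℕ) :
    b * a ^ p = c ^ p • (a ^ p * b) := by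
  induction p with
  | zero => simp
  | succ p ih =>
    rw [pow_succ, ← mul_assoc, ih, smul_mul_assoc, mul_assoc, h, mul_smul_comm, smul_smul,
      ← pow_succ, ← mul_assoc, ← pow_succ]

theorem mul_mem_of_mem_span {s : Set A} {N : Submodule R A} {a x : A}
    (h : ∀ y ∈ s, a * y ∈ N) (hx : x ∈ Submodule.span R s) : a * x ∈ N :=
  (Submodule.span_le (p := N.comap (LinearMap.mulLeft R a))).mpr h hx

theorem mul_mem_of_mem_span' {s : Set A} {N : Submodule R A} {a x : A}
    (h : ∀ y ∈ s, y * a ∈ N) (hx : x ∈ Submodule.span R s) : x * a ∈ N :=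
  (Submodule.span_le (p := N.comap (LinearMap.mulRight R a))).mpr h hx

theorem adjoin_toSubmodule_le_of_mul_mem {s : Set A} {N : Submodule R A} (h1 : 1 ∈ N)
    (hmul : ∀ x ∈ s, ∀ y ∈ N, x * y ∈ N) :
    Subalgebra.toSubmodule (Algebra.adjoin R s) ≤ N := by
  rw [Algebra.adjoin_eq_span, Submodule.span_le]
  intro w hw
  induction hw using Submonoid.closure_induction_left with
  | one => exact h1
  | mul_left x hx y _ hy => exact hmul x hx y hy

theorem exists_mul_eq_mul_of_mem_adjoin {s : Set A} {a : A}
    (h : ∀ x ∈ s, ∃ c : R, a * x = c • (x * a)) {y : A} (hy : y ∈ Algebra.adjoin R s) :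
    ∃ y' ∈ Algebra.adjoin R s, a * y = y' * a := by
  induction hy using Algebra.adjoin_induction with
  | mem x hx =>
    obtain ⟨c, hc⟩ := h x hx
    exact ⟨c • x, Subalgebra.smul_mem _ (Algebra.subset_adjoin hx) c, by rw [hc, smul_mul_assoc]⟩
  | algebraMap r =>
    exact ⟨algebraMap R A r, Subalgebra.algebraMap_mem _ r, (Algebra.commutes r a).symm⟩
  | add x y _ _ hx hy =>
    obtain ⟨x', hx', hxx'⟩ := hx
    obtain ⟨y', hy', hyy'⟩ := hy
    exact ⟨x' + y', add_mem hx' hy', by rw [mul_add, hxx', hyy', add_mul]⟩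
  | mul x y _ _ hx hy =>
    obtain ⟨x', hx', hxx'⟩ := hx
    obtain ⟨y', hy', hyy'⟩ := hy
    exact ⟨x' * y', mul_mem hx' hy', by rw [← mul_assoc, hxx', mul_assoc, hyy', mul_assoc]⟩

theorem mul_mul_mem_of_mem_adjoin {ι : Type*} {x y : ι → A} {S : Submodule R A}
    (hx : ∀ j, ∀ s ∈ S, x j * s ∈ S)
    (hyx : ∀ k i, y k * x i ∈ Submodule.span R (Set.range fun p : ι × ι => x p.1 * y p.2))
    {w : A} (hw : w ∈ Algebra.adjoin R (Set.range x)) {r : A} (hr : ∀ l, y l * r ∈ S) (k : ι) :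
    y k * (w * r) ∈ S := by
  induction hw using Algebra.adjoin_induction generalizing r k with
  | mem _ hw =>
    obtain ⟨i, rfl⟩ := hw
    rw [← mul_assoc]
    refine mul_mem_of_mem_span' ?_ (hyx k i)
    rintro _ ⟨⟨j, l⟩, rfl⟩
    simpa only [mul_assoc] using hx j _ (hr l)
  | algebraMap c => simpa [Algebra.algebraMap_eq_smul_one] using S.smul_mem c (hr k)
  | add w₁ w₂ _ _ h₁ h₂ => simpa [add_mul, mul_add] using add_mem (h₁ hr k) (h₂ hr k)
  | mul w₁ w₂ _ _ h₁ h₂ => simpa [mul_assoc] using h₁ (fun l => h₂ hr l) k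

end Algebra

theorem star_mem_adjoin_union_range_star {R A ι : Type*} [CommSemiring R] [StarRing R]
    [Semiring A] [StarRing A] [Algebra R A] [StarModule R A] {x : ι → A} {a : A}
    (ha : a ∈ Algebra.adjoin R (Set.range x)) :
    star a ∈ Algebra.adjoin R (Set.range x ∪ Set.range fun i => star (x i)) := by
  have hstar : star a ∈ Algebra.adjoin R (star (Set.range x)) := by
    rwa [← Subalgebra.star_adjoin_comm, Subalgebra.mem_star_iff, star_star]
  refine Algebra.adjoin_mono ?_ hstar
  rintro b ⟨i, hi⟩
  exact Or.inr ⟨i, show star (x i) = b by rw [hi, star_star]⟩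

section OrderedMonomial

def orderedMonomial {M : Type*} [Monoid M] {m : ℕ} (x : Fin m → M) (e : Fin m → ℕ) : M :=
  (List.ofFn fun k => x k ^ e k).prod

theorem orderedMonomial_zero {M : Type*} [Monoid M] {m : ℕ} (x : Fin m → M) :
    orderedMonomial x 0 = 1 := by
  simp [orderedMonomial]

theorem orderedMonomial_succ {M : Type*} [Monoid M] {m : ℕ} (x : Fin (m + 1) → M)
    (e : Fin (m + 1) → ℕ) :
    orderedMonomial x e = x 0 ^ e 0 * orderedMonomial (Fin.tail x) (Fin.tail e) := by
  simp [orderedMonomial, List.ofFn_succ, Fin.tail]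

variable {R A : Type*} [CommSemiring R] [Semiring A] [Algebra R A]

theorem orderedMonomial_mem_adjoin {m : ℕ} (x : Fin m → A) (e : Fin m → ℕ) :
    orderedMonomial x e ∈ Algebra.adjoin R (Set.range x) :=
  list_prod_mem <| by
    simpa using fun k => pow_mem (Algebra.subset_adjoin (Set.mem_range_self k)) (e k)

theorem exists_mul_orderedMonomial_eq_smul {m : ℕ} {x : Fin m → A} {c : R}
    (hx : ∀ k l, k < l → x l * x k = c • (x k * x l)) (i : Fin m) (e : Fin m → ℕ) :
    ∃ d : R, x i * orderedMonomial x e =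
      d • orderedMonomial x (Function.update e i (e i + 1)) := by
  induction m with
  | zero => exact i.elim0
  | succ m ih =>
    rw [orderedMonomial_succ, orderedMonomial_succ]
    cases i using Fin.cases with
    | zero =>
      refine ⟨1, ?_⟩
      rw [one_smul, Fin.tail_update_zero, Function.update_self, pow_succ', mul_assoc]
    | succ j =>
      obtain ⟨d, hd⟩ := ih (x := Fin.tail x)
        (fun k l hkl => hx k.succ l.succ (Fin.succ_lt_succ_iff.mpr hkl)) j (Fin.tail e)
      change x j.succ * _ = d • orderedMonomial _ (Function.update _ j (e j.succ + 1)) at hd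
      refine ⟨c ^ e 0 * d, ?_⟩
      rw [← mul_assoc, mul_pow_eq_smul_pow_mul (hx 0 j.succ (Fin.succ_pos j)), smul_mul_assoc,
        mul_assoc, Fin.tail_update_succ, Function.update_of_ne (Fin.succ_ne_zero j).symm, hd,
        mul_smul_comm, smul_smul]

theorem adjoin_le_span_orderedMonomial {m : ℕ} {x : Fin m → A} {c : R}
    (hx : ∀ k l, k < l → x l * x k = c • (x k * x l)) :
    Subalgebra.toSubmodule (Algebra.adjoin R (Set.range x)) ≤
      Submodule.span R (Set.range (orderedMonomial x)) := by
  refine adjoin_toSubmodule_le_of_mul_mem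
    (Submodule.subset_span ⟨0, orderedMonomial_zero x⟩) ?_
  rintro _ ⟨i, rfl⟩ y hy
  refine mul_mem_of_mem_span ?_ hy
  rintro _ ⟨e, rfl⟩
  obtain ⟨d, hd⟩ := exists_mul_orderedMonomial_eq_smul hx i e
  rw [hd]
  exact Submodule.smul_mem _ d (Submodule.subset_span (Set.mem_range_self _))

end OrderedMonomial

section StarZPow

variable {A : Type*}

def starZPow [Monoid A] [Star A] (a : A) (m : ℤ) : A :=
  if 0 ≤ m then a ^ m.toNat else star a ^ (-m).toNat

theorem starZPow_of_nonneg [Monoid A] [Star A] (a : A) {m : ℤ} (hm : 0 ≤ m) :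
    starZPow a m = a ^ m.toNat :=
  if_pos hm

theorem starZPow_of_nonpos [Monoid A] [Star A] (a : A) {m : ℤ} (hm : m ≤ 0) :
    starZPow a m = star a ^ (-m).toNat := by
  rcases hm.lt_or_eq with hm | rfl
  · exact if_neg hm.not_ge
  · simp [starZPow]

theorem starZPow_star [Monoid A] [InvolutiveStar A] (a : A) (m : ℤ) :
    starZPow (star a) m = starZPow a (-m) := by
  rcases le_total 0 m with hm | hm
  · rw [starZPow_of_nonneg _ hm, starZPow_of_nonpos _ (by omega), neg_neg]
  · rw [starZPow_of_nonpos _ hm, starZPow_of_nonneg _ (by omega), star_star]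

variable {R : Type*} [CommSemiring R] [Ring A] [StarRing A] [Algebra R A]

theorem exists_mul_starZPow_eq {ι : Type*} [Fintype ι] {a : A} {x : ι → A} {c : R}
    (hstar : a * star a = 1 - ∑ k, x k * star (x k))
    (hcomm : ∀ k, star (x k) * star a = c • (star a * star (x k))) (m : ℤ) :
    ∃ d : R, a * starZPow a m =
      starZPow a (m + 1) - d • ∑ k, x k * starZPow a (m + 1) * star (x k) := by
  rcases le_or_gt 0 m with hm | hm
  · refine ⟨0, ?_⟩
    rw [zero_smul, sub_zero, starZPow_of_nonneg a hm, starZPow_of_nonneg a (by omega),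
      ← pow_succ']
    congr 1
    omega
  · refine ⟨c ^ (-(m + 1)).toNat, ?_⟩
    rw [starZPow_of_nonpos a hm.le, starZPow_of_nonpos a (by omega),
      show (-m).toNat = (-(m + 1)).toNat + 1 by omega, pow_succ', ← mul_assoc, hstar, sub_mul,
      one_mul, Finset.sum_mul, Finset.smul_sum]
    congr 1
    refine Finset.sum_congr rfl fun k _ => ?_
    rw [mul_assoc, mul_pow_eq_smul_pow_mul (hcomm k), mul_smul_comm, mul_assoc]

end StarZPow

section QSphere

variable {A : Type*} [Ring A] [StarRing A] [Algebra ℂ A] {n : ℕ}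

structure QSphereRelations (q : ℝ) (z : Fin (n + 1) → A) : Prop where
  mul_of_lt : ∀ i j : Fin (n + 1), i < j → z j * z i = (q : ℂ) • (z i * z j)
  star_mul_of_ne : ∀ i j : Fin (n + 1), i ≠ j → star (z i) * z j = (q : ℂ) • (z j * star (z i))
  star_mul_self : ∀ i : Fin (n + 1), star (z i) * z i =
    z i * star (z i) + ((1 - q ^ 2 : ℝ) : ℂ) • ∑ j ∈ Finset.Ioi i, z j * star (z j)
  sum_mul_star : ∑ j : Fin (n + 1), z j * star (z j) = 1

def monomialSpan (z : Fin (n + 1) → A) : Submodule ℂ A :=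
  Submodule.span ℂ {a | ∃ (iv : Fin n → ℕ) (iN : ℤ) (jv : Fin n → ℕ),
    a = orderedMonomial (Fin.init z) iv * starZPow (z (Fin.last n)) iN *
      star (orderedMonomial (Fin.init z) jv)}

variable {z : Fin (n + 1) → A}

theorem one_mem_monomialSpan : (1 : A) ∈ monomialSpan z :=
  Submodule.subset_span ⟨0, 0, 0, by simp [orderedMonomial_zero, starZPow]⟩

theorem monomialSpan_le_adjoin [StarModule ℂ A] :
    monomialSpan z ≤
      Subalgebra.toSubmodule (Algebra.adjoin ℂ (Set.range z ∪ Set.range fun i => star (z i))) := by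
  have hinit : Algebra.adjoin ℂ (Set.range (Fin.init z)) ≤ Algebra.adjoin ℂ (Set.range z) :=
    Algebra.adjoin_mono (by rintro _ ⟨k, rfl⟩; exact ⟨k.castSucc, rfl⟩)
  have hunion : Algebra.adjoin ℂ (Set.range z) ≤
      Algebra.adjoin ℂ (Set.range z ∪ Set.range fun i => star (z i)) :=
    Algebra.adjoin_mono Set.subset_union_left
  rw [monomialSpan, Submodule.span_le]
  rintro _ ⟨iv, m, jv, rfl⟩
  rw [SetLike.mem_coe, Subalgebra.mem_toSubmodule]
  refine mul_mem (mul_mem (hunion (hinit (orderedMonomial_mem_adjoin _ iv))) ?_)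
    (star_mem_adjoin_union_range_star (hinit (orderedMonomial_mem_adjoin _ jv)))
  rcases le_total 0 m with hm | hm
  · rw [starZPow_of_nonneg _ hm]
    exact pow_mem (Algebra.subset_adjoin (Set.mem_union_left _ (Set.mem_range_self _))) _
  · rw [starZPow_of_nonpos _ hm]
    exact pow_mem (Algebra.subset_adjoin (Set.mem_union_right _ (Set.mem_range_self _))) _

variable {q : ℝ}

namespace QSphereRelations

theorem init_mul_of_lt (hz : QSphereRelations q z) (k l : Fin n) (hkl : k < l) :
    Fin.init z l * Fin.init z k = (q : ℂ) • (Fin.init z k * Fin.init z l) :=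
  hz.mul_of_lt _ _ (Fin.castSucc_lt_castSucc_iff.mpr hkl)

theorem star_last_mul_last (hz : QSphereRelations q z) :
    star (z (Fin.last n)) * z (Fin.last n) = z (Fin.last n) * star (z (Fin.last n)) := by
  simpa [Finset.Ioi_eq_empty.mpr fun b _ => Fin.le_last b] using hz.star_mul_self (Fin.last n)

theorem last_mul_star_last (hz : QSphereRelations q z) :
    z (Fin.last n) * star (z (Fin.last n)) = 1 - ∑ k, Fin.init z k * star (Fin.init z k) := by
  rw [eq_sub_iff_add_eq, add_comm, ← hz.sum_mul_star, Fin.sum_univ_castSucc]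
  rfl

theorem star_init_mul_star_last [StarModule ℂ A] (hz : QSphereRelations q z) (k : Fin n) :
    star (Fin.init z k) * star (z (Fin.last n)) =
      (q : ℂ) • (star (z (Fin.last n)) * star (Fin.init z k)) := by
  rw [← star_mul, Fin.init, hz.mul_of_lt _ _ (Fin.castSucc_lt_last k), star_smul, star_mul,
    Complex.star_def, Complex.conj_ofReal]

theorem exists_star_init_mul_starZPow [StarModule ℂ A] (hz : QSphereRelations q z) (k : Fin n)
    (m : ℤ) : ∃ c : ℂ, star (Fin.init z k) * starZPow (z (Fin.last n)) m =
      c • (starZPow (z (Fin.last n)) m * star (Fin.init z k)) := by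
  rcases le_total 0 m with hm | hm
  · rw [starZPow_of_nonneg _ hm]
    exact ⟨_, mul_pow_eq_smul_pow_mul (hz.star_mul_of_ne _ _ (Fin.castSucc_lt_last k).ne) _⟩
  · rw [starZPow_of_nonpos _ hm]
    exact ⟨_, mul_pow_eq_smul_pow_mul (hz.star_init_mul_star_last k) _⟩

theorem star_mul_mem_span (hz : QSphereRelations q z) (k i : Fin (n + 1)) :
    star (z k) * z i ∈
      Submodule.span ℂ (Set.range fun p : Fin (n + 1) × Fin (n + 1) => z p.1 * star (z p.2)) := by
  have hmem (j l : Fin (n + 1)) : z j * star (z l) ∈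
      Submodule.span ℂ (Set.range fun p : Fin (n + 1) × Fin (n + 1) => z p.1 * star (z p.2)) :=
    Submodule.subset_span ⟨(j, l), rfl⟩
  obtain rfl | hki := eq_or_ne k i
  · rw [hz.star_mul_self]
    exact add_mem (hmem k k) (Submodule.smul_mem _ _ (sum_mem fun j _ => hmem j j))
  · rw [hz.star_mul_of_ne k i hki]
    exact Submodule.smul_mem _ _ (hmem i k)

variable [StarModule ℂ A]

theorem mul_starZPow_mul_star_mem (hz : QSphereRelations q z) {b b' : A}
    (hb : b ∈ Algebra.adjoin ℂ (Set.range (Fin.init z)))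
    (hb' : b' ∈ Algebra.adjoin ℂ (Set.range (Fin.init z))) (m : ℤ) :
    b * starZPow (z (Fin.last n)) m * star b' ∈ monomialSpan z := by
  have hspan := adjoin_le_span_orderedMonomial hz.init_mul_of_lt
  replace hb' := hspan hb'
  induction hb' using Submodule.span_induction with
  | mem _ hjv =>
    obtain ⟨jv, rfl⟩ := hjv
    rw [mul_assoc]
    refine mul_mem_of_mem_span' ?_ (hspan hb)
    rintro _ ⟨iv, rfl⟩
    exact Submodule.subset_span ⟨iv, m, jv, (mul_assoc _ _ _).symm⟩
  | zero => simp
  | add x y _ _ hx hy => simpa [mul_add] using add_mem hx hy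
  | smul c x _ hx => simpa [star_smul] using Submodule.smul_mem _ (star c) hx

theorem mul_sub_smul_sum_mul_star_mem (hz : QSphereRelations q z) {b b' : A}
    (hb : b ∈ Algebra.adjoin ℂ (Set.range (Fin.init z)))
    (hb' : b' ∈ Algebra.adjoin ℂ (Set.range (Fin.init z))) (m : ℤ) (d : ℂ) :
    b * (starZPow (z (Fin.last n)) m -
      d • ∑ k, Fin.init z k * starZPow (z (Fin.last n)) m * star (Fin.init z k)) * star b' ∈
      monomialSpan z := by
  have hinit {c : A} (k : Fin n) (hc : c ∈ Algebra.adjoin ℂ (Set.range (Fin.init z))) :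
      c * Fin.init z k ∈ Algebra.adjoin ℂ (Set.range (Fin.init z)) :=
    mul_mem hc (Algebra.subset_adjoin (Set.mem_range_self k))
  rw [mul_sub, sub_mul, mul_smul_comm, smul_mul_assoc, Finset.mul_sum, Finset.sum_mul]
  refine sub_mem (hz.mul_starZPow_mul_star_mem hb hb' m)
    (Submodule.smul_mem _ _ (sum_mem fun k _ => ?_))
  simpa only [star_mul, mul_assoc] using
    hz.mul_starZPow_mul_star_mem (hinit k hb) (hinit k hb') m

theorem mul_last_mul_starZPow_mul_star_mem (hz : QSphereRelations q z) {b b' : A}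
    (hb : b ∈ Algebra.adjoin ℂ (Set.range (Fin.init z)))
    (hb' : b' ∈ Algebra.adjoin ℂ (Set.range (Fin.init z))) (m : ℤ) :
    b * (z (Fin.last n) * starZPow (z (Fin.last n)) m) * star b' ∈ monomialSpan z := by
  obtain ⟨d, hd⟩ := exists_mul_starZPow_eq hz.last_mul_star_last hz.star_init_mul_star_last m
  rw [hd]
  exact hz.mul_sub_smul_sum_mul_star_mem hb hb' _ d

theorem mul_star_last_mul_starZPow_mul_star_mem (hz : QSphereRelations q z) {b b' : A}
    (hb : b ∈ Algebra.adjoin ℂ (Set.range (Fin.init z)))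
    (hb' : b' ∈ Algebra.adjoin ℂ (Set.range (Fin.init z))) (m : ℤ) :
    b * (star (z (Fin.last n)) * starZPow (z (Fin.last n)) m) * star b' ∈ monomialSpan z := by
  have hstar : star (z (Fin.last n)) * star (star (z (Fin.last n))) =
      1 - ∑ k, Fin.init z k * star (Fin.init z k) := by
    rw [star_star, hz.star_last_mul_last, hz.last_mul_star_last]
  have hcomm (k : Fin n) : star (Fin.init z k) * star (star (z (Fin.last n))) =
      (q : ℂ) • (star (star (z (Fin.last n))) * star (Fin.init z k)) := by
    rw [star_star]
    exact hz.star_mul_of_ne _ _ (Fin.castSucc_lt_last k).ne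
  obtain ⟨d, hd⟩ := exists_mul_starZPow_eq hstar hcomm (-m)
  rw [starZPow_star, starZPow_star, neg_neg] at hd
  rw [hd]
  exact hz.mul_sub_smul_sum_mul_star_mem hb hb' _ d

theorem init_mul_mem_monomialSpan (hz : QSphereRelations q z) (k : Fin n) {x : A}
    (hx : x ∈ monomialSpan z) : Fin.init z k * x ∈ monomialSpan z := by
  refine mul_mem_of_mem_span ?_ hx
  rintro _ ⟨iv, m, jv, rfl⟩
  simpa only [mul_assoc] using hz.mul_starZPow_mul_star_mem
    (mul_mem (Algebra.subset_adjoin (Set.mem_range_self k)) (orderedMonomial_mem_adjoin _ iv))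
    (orderedMonomial_mem_adjoin _ jv) m

theorem last_mul_mem_monomialSpan (hz : QSphereRelations q z) {x : A}
    (hx : x ∈ monomialSpan z) : z (Fin.last n) * x ∈ monomialSpan z := by
  refine mul_mem_of_mem_span ?_ hx
  rintro _ ⟨iv, m, jv, rfl⟩
  obtain ⟨b, hb, hzb⟩ := exists_mul_eq_mul_of_mem_adjoin
    (by rintro _ ⟨k, rfl⟩; exact ⟨_, hz.mul_of_lt _ _ (Fin.castSucc_lt_last k)⟩)
    (orderedMonomial_mem_adjoin (R := ℂ) (Fin.init z) iv)
  rw [← mul_assoc, ← mul_assoc, hzb, mul_assoc b]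
  exact hz.mul_last_mul_starZPow_mul_star_mem hb (orderedMonomial_mem_adjoin _ jv) m

theorem mul_mem_monomialSpan (hz : QSphereRelations q z) (i : Fin (n + 1)) {x : A}
    (hx : x ∈ monomialSpan z) : z i * x ∈ monomialSpan z := by
  cases i using Fin.lastCases with
  | last => exact hz.last_mul_mem_monomialSpan hx
  | cast k => exact hz.init_mul_mem_monomialSpan k hx

theorem star_mul_starZPow_mul_star_mem (hz : QSphereRelations q z) (l : Fin (n + 1)) (m : ℤ)
    (jv : Fin n → ℕ) : star (z l) * (starZPow (z (Fin.last n)) m *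
      star (orderedMonomial (Fin.init z) jv)) ∈ monomialSpan z := by
  cases l using Fin.lastCases with
  | last =>
    simpa only [one_mul, mul_assoc] using hz.mul_star_last_mul_starZPow_mul_star_mem
      (one_mem _) (orderedMonomial_mem_adjoin _ jv) m
  | cast k =>
    obtain ⟨c, hc⟩ := hz.exists_star_init_mul_starZPow k m
    have hmem := hz.mul_starZPow_mul_star_mem (one_mem _)
      (mul_mem (orderedMonomial_mem_adjoin _ jv) (Algebra.subset_adjoin (Set.mem_range_self k))) m
    rw [one_mul] at hmem
    change star (Fin.init z k) * _ ∈ _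
    rw [← mul_assoc, hc, smul_mul_assoc, mul_assoc, ← star_mul]
    exact Submodule.smul_mem _ c hmem

theorem star_mul_mem_monomialSpan (hz : QSphereRelations q z) (i : Fin (n + 1)) {x : A}
    (hx : x ∈ monomialSpan z) : star (z i) * x ∈ monomialSpan z := by
  refine mul_mem_of_mem_span ?_ hx
  rintro _ ⟨iv, m, jv, rfl⟩
  have hiv : orderedMonomial (Fin.init z) iv ∈ Algebra.adjoin ℂ (Set.range z) :=
    Algebra.adjoin_mono (by rintro _ ⟨k, rfl⟩; exact ⟨k.castSucc, rfl⟩)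
      (orderedMonomial_mem_adjoin _ iv)
  rw [mul_assoc _ _ (star _)]
  exact mul_mul_mem_of_mem_adjoin (y := fun l => star (z l)) (fun j _ => hz.mul_mem_monomialSpan j)
    hz.star_mul_mem_span hiv (fun l => hz.star_mul_starZPow_mul_star_mem l m jv) i

theorem adjoin_le_monomialSpan (hz : QSphereRelations q z) :
    Subalgebra.toSubmodule (Algebra.adjoin ℂ (Set.range z ∪ Set.range fun i => star (z i))) ≤
      monomialSpan z := by
  refine adjoin_toSubmodule_le_of_mul_mem one_mem_monomialSpan ?_
  rintro _ (⟨i, rfl⟩ | ⟨i, rfl⟩) x hx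
  exacts [hz.mul_mem_monomialSpan i hx, hz.star_mul_mem_monomialSpan i hx]

end QSphereRelations

end QSphere

theorem qSphere_monomials_span_general
    {A : Type*} [Ring A] [StarRing A] [Algebra ℂ A] [StarModule ℂ A]
    {n : ℕ} (q : ℝ) (z : Fin (n + 1) → A)
    (rel1 : ∀ i j : Fin (n + 1), i < j → z j * z i = (q : ℂ) • (z i * z j))
    (rel2 : ∀ i j : Fin (n + 1), i ≠ j → star (z i) * z j = (q : ℂ) • (z j * star (z i)))
    (rel3 : ∀ i : Fin (n + 1), star (z i) * z i =
      z i * star (z i) + ((1 - q ^ 2 : ℝ) : ℂ) • ∑ j ∈ Finset.Ioi i, z j * star (z j))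
    (rel4 : ∑ j : Fin (n + 1), z j * star (z j) = 1) :
    Submodule.span ℂ
      {a : A | ∃ (iv : Fin n → ℕ) (iN : ℤ) (jv : Fin n → ℕ),
        a = (List.ofFn fun k : Fin n => z k.castSucc ^ iv k).prod *
            (if 0 ≤ iN then z (Fin.last n) ^ iN.toNat
              else star (z (Fin.last n)) ^ (-iN).toNat) *
            star ((List.ofFn fun k : Fin n => z k.castSucc ^ jv k).prod)} =
    Subalgebra.toSubmodule
      (Algebra.adjoin ℂ (Set.range z ∪ Set.range fun i => star (z i))) :=
  le_antisymm monomialSpan_le_adjoin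
    (QSphereRelations.adjoin_le_monomialSpan ⟨rel1, rel2, rel3, rel4⟩)

/-- If `0 ≤ q < 1` and `z 0, …, z n` satisfy the `q`-sphere relations in
a unital complex *-algebra `A`, then the ℂ-linear span of the monomials
`z₀^{i₀} ⋯ z_{n−1}^{i_{n−1}} zₙ^{iₙ} (z₀^{j₀} ⋯ z_{n−1}^{j_{n−1}})*` (with
`(zₙ*)^{−iₙ}` in place of `zₙ^{iₙ}` when `iₙ < 0`) equals the unital subalgebra of `A`
generated by `z₀, …, zₙ` and their adjoints. -/
theorem qSphere_monomials_span
    {A : Type*} [Ring A] [StarRing A] [Algebra ℂ A] [StarModule ℂ A]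
    {n : ℕ} (q : ℝ) (hq0 : 0 ≤ q) (hq1 : q < 1) (z : Fin (n + 1) → A)
    (rel1 : ∀ i j : Fin (n + 1), i < j → z j * z i = (q : ℂ) • (z i * z j))
    (rel2 : ∀ i j : Fin (n + 1), i ≠ j → star (z i) * z j = (q : ℂ) • (z j * star (z i)))
    (rel3 : ∀ i : Fin (n + 1), star (z i) * z i =
      z i * star (z i) + ((1 - q ^ 2 : ℝ) : ℂ) • ∑ j ∈ Finset.Ioi i, z j * star (z j))
    (rel4 : ∑ j : Fin (n + 1), z j * star (z j) = 1) :
    Submodule.span ℂ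
      {a : A | ∃ (iv : Fin n → ℕ) (iN : ℤ) (jv : Fin n → ℕ),
        a = (List.ofFn fun k : Fin n => z k.castSucc ^ iv k).prod *
            (if 0 ≤ iN then z (Fin.last n) ^ iN.toNat
              else star (z (Fin.last n)) ^ (-iN).toNat) *
            star ((List.ofFn fun k : Fin n => z k.castSucc ^ jv k).prod)} =
    Subalgebra.toSubmodule
      (Algebra.adjoin ℂ (Set.range z ∪ Set.range fun i => star (z i))) :=
  qSphere_monomials_span_general q z rel1 rel2 rel3 rel4
end

section
/- Let n ∈ ℕ, let q be a real number with 0 < q < 1, and let H = ℓ²(ℕⁿ × ℤ) with standard orthonormal basis {e_k : k = (k₀, …, kₙ) ∈ ℕⁿ × ℤ}. Then there exist bounded linear operators Z₀, …, Zₙ on H determined on basis vectors by: Z₀ e_{(k₀, …, kₙ)} = √(1 − q^{2(k₀+1)}) e_{(k₀+1, k₁, …, kₙ)}; Z_i e_{(k₀, …, kₙ)} = q^{k₀+⋯+k_{i−1}} √(1 − q^{2(k_i+1)}) e_{(k₀, …, k_i+1, …, kₙ)} for 0 < i < n; and Zₙ e_{(k₀, …, kₙ)} = q^{k₀+⋯+k_{n−1}}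 e_{(k₀, …, k_{n−1}, kₙ+1)}; and these operators satisfy the q-sphere relations in the C*-algebra B(H). -/
/-!
Each `Z i` is a weighted shift `e k ↦ w_i(k) e (σ_i k)` along an injection `σ_i` of the index
set, bounded since `|w_i| ≤ 1`, whose adjoint is the weighted composition operator
`f ↦ conj w_i · (f ∘ σ_i)`; so every relation can be checked on basis vectors. The shifts commute,
and moving along `σ_i` multiplies `w_j` by `q` if `i < j` and leaves it unchanged if `j < i`: this
gives the two commutation relations. Both `Z_j Z_j*` and `Z_j* Z_j` are diagonal, with entries
`L_j - L_(j+1)` and `L_j - q² L_(j+1)`, where `L_t(k) = q^(2(k₀ + ⋯ + k_(t-1)))` and `L_(n+1) = 0`;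
the last two relations are then telescoping sums.
-/

open Finset

/-- The Hilbert space `ℓ²(ℕⁿ × ℤ)`. -/
abbrev QSphereL2 (n : ℕ) : Type :=
  lp (fun _ : (Fin n → ℕ) × ℤ => ℂ) 2

/-- The standard basis vector `e k` of `ℓ²(ℕⁿ × ℤ)`. -/
noncomputable abbrev QSphereL2.e {n : ℕ} (k : (Fin n → ℕ) × ℤ) : QSphereL2 n :=
  lp.single 2 k (1 : ℂ)

open Function
open scoped lp ENNReal ComplexConjugate

theorem Memℓp.comp_injective {ι κ E : Type*} [NormedAddCommGroup E] {p : ℝ≥0∞} {f : ι → E}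
    (hf : Memℓp f p) {σ : κ → ι} (hσ : Injective σ) : Memℓp (f ∘ σ) p := by
  obtain rfl | rfl | hp := p.trichotomy
  · exact memℓp_zero (hf.finite_dsupport.preimage hσ.injOn)
  · exact memℓp_infty (hf.bddAbove.mono (Set.range_comp_subset_range σ fun i => ‖f i‖))
  · exact memℓp_gen ((hf.summable hp).comp_injective hσ)

namespace lp

variable {ι : Type*}

theorem sum_sq_norm_comp_le {κ E : Type*} [NormedAddCommGroup E] {σ : κ → ι}
    (hσ : Injective σ) (f : ℓ²(ι, E)) (s : Finset κ) : ∑ m ∈ s, ‖f (σ m)‖ ^ 2 ≤ ‖f‖ ^ 2 := by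
  simpa using lp.sum_rpow_le_norm_rpow (p := 2) (by simp) f (s.map ⟨σ, hσ⟩)

theorem norm_apply_mul_le {𝕜 : Type*} [NormedRing 𝕜] (w : ℓ^∞(ι, 𝕜)) (m : ι) (z : 𝕜) :
    ‖w m * z‖ ≤ ‖w‖ * ‖z‖ :=
  (norm_mul_le _ _).trans (by gcongr; exact lp.norm_apply_le_norm (by simp) w m)

variable [DecidableEq ι]

theorem ext_continuousLinearMap_single_one {𝕜 F : Type*} [NormedRing 𝕜] [AddCommMonoid F]
    [Module 𝕜 F] [TopologicalSpace F] [T2Space F] {A B : ℓ²(ι, 𝕜) →L[𝕜] F}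
    (h : ∀ k, A (lp.single 2 k 1) = B (lp.single 2 k 1)) : A = B := by
  refine lp.ext_continuousLinearMap (by simp) fun k => ContinuousLinearMap.ext fun a => ?_
  have hsingle : (lp.single 2 k a : ℓ²(ι, 𝕜)) = a • lp.single 2 k 1 := by
    rw [← lp.single_smul, smul_eq_mul, mul_one]
  simp [hsingle, h k]

end lp

section WeightedShift

variable {ι : Type*} {σ τ : ι → ι}

noncomputable def weightedComp (hσ : Injective σ) (w : ℓ^∞(ι, ℂ)) :
    ℓ²(ι, ℂ) →L[ℂ] ℓ²(ι, ℂ) :=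
  LinearMap.mkContinuous
    { toFun f := ⟨fun m => w m * f (σ m),
        (((lp.memℓp f).comp_injective hσ).norm.const_mul ‖w‖).mono fun m =>
          lp.norm_apply_mul_le w m _⟩
      map_add' f g := lp.ext <| funext fun m => mul_add _ _ _
      map_smul' c f := lp.ext <| funext fun m => mul_left_comm _ _ _ }
    ‖w‖ fun f => by
      refine lp.norm_le_of_forall_sum_le (p := 2) (by simp) (by positivity) fun s => ?_
      simp only [ENNReal.toReal_ofNat, Real.rpow_two]
      calc ∑ m ∈ s, ‖w m * f (σ m)‖ ^ 2
          ≤ ∑ m ∈ s, (‖w‖ * ‖f (σ m)‖) ^ 2 := by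
            gcongr with m; exact lp.norm_apply_mul_le w m _
        _ = ‖w‖ ^ 2 * ∑ m ∈ s, ‖f (σ m)‖ ^ 2 := by simp [mul_pow, Finset.mul_sum]
        _ ≤ (‖w‖ * ‖f‖) ^ 2 := by
            rw [mul_pow]; gcongr; exact lp.sum_sq_norm_comp_le hσ f s

@[simp]
theorem weightedComp_apply (hσ : Injective σ) (w : ℓ^∞(ι, ℂ)) (f : ℓ²(ι, ℂ)) (m : ι) :
    weightedComp hσ w f m = w m * f (σ m) := rfl

-- Defined as an adjoint, so that boundedness and the formula for its adjoint come for free.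
noncomputable def weightedShift (hσ : Injective σ) (w : ℓ^∞(ι, ℂ)) :
    ℓ²(ι, ℂ) →L[ℂ] ℓ²(ι, ℂ) :=
  ContinuousLinearMap.adjoint (weightedComp hσ (star w))

theorem star_weightedShift (hσ : Injective σ) (w : ℓ^∞(ι, ℂ)) :
    star (weightedShift hσ w) = weightedComp hσ (star w) := by
  rw [ContinuousLinearMap.star_eq_adjoint, weightedShift, ContinuousLinearMap.adjoint_adjoint]

variable [DecidableEq ι]

theorem weightedShift_single (hσ : Injective σ) (w : ℓ^∞(ι, ℂ)) (k : ι) :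
    weightedShift hσ w (lp.single 2 k 1) = w k • lp.single 2 (σ k) 1 := by
  refine lp.ext <| funext fun l => ?_
  have hinner := (weightedComp hσ (star w)).adjoint_inner_right (lp.single 2 l 1)
    (lp.single 2 k 1)
  simp only [lp.inner_single_left, lp.inner_single_right, weightedComp_apply, RCLike.inner_apply,
    map_one, one_mul, mul_one, lp.single_apply, Pi.single_apply, lp.star_apply] at hinner
  rw [weightedShift, hinner]
  by_cases h : σ k = l <;> simp [h, Ne.symm]

theorem star_weightedShift_single (hσ : Injective σ) (w : ℓ^∞(ι, ℂ)) (m : ι) :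
    star (weightedShift hσ w) (lp.single 2 (σ m) 1) = conj (w m) • lp.single 2 m 1 := by
  refine lp.ext <| funext fun l => ?_
  simp only [star_weightedShift, weightedComp_apply, lp.single_apply, Pi.single_apply, hσ.eq_iff,
    lp.coeFn_smul, Pi.smul_apply, smul_eq_mul, lp.star_apply]
  split_ifs with h <;> simp [h]

theorem star_weightedShift_single_of_notMem_range (hσ : Injective σ) (w : ℓ^∞(ι, ℂ)) {k : ι}
    (hk : k ∉ Set.range σ) : star (weightedShift hσ w) (lp.single 2 k 1) = 0 := by
  refine lp.ext <| funext fun l => ?_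
  have : σ l ≠ k := fun h => hk ⟨l, h⟩
  simp [star_weightedShift, this]

theorem weightedShift_mul_weightedShift (hσ : Injective σ) (hτ : Injective τ)
    (w v : ℓ^∞(ι, ℂ)) (hστ : ∀ k, σ (τ k) = τ (σ k)) (c : ℂ)
    (hwv : ∀ k, v k * w (τ k) = c * (w k * v (σ k))) :
    weightedShift hσ w * weightedShift hτ v = c • (weightedShift hτ v * weightedShift hσ w) := by
  refine lp.ext_continuousLinearMap_single_one fun k => ?_
  simp [weightedShift_single, smul_smul, hστ, hwv]

theorem star_weightedShift_mul_weightedShift (hσ : Injective σ) (hτ : Injective τ)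
    (w v : ℓ^∞(ι, ℂ)) (hστ : ∀ k, σ (τ k) = τ (σ k))
    (hrange : ∀ k, τ k ∈ Set.range σ → k ∈ Set.range σ) (c : ℂ)
    (hwv : ∀ k, v (σ k) * conj (w (τ k)) = c * (conj (w k) * v k)) :
    star (weightedShift hσ w) * weightedShift hτ v =
      c • (weightedShift hτ v * star (weightedShift hσ w)) := by
  refine lp.ext_continuousLinearMap_single_one fun k => ?_
  by_cases hk : k ∈ Set.range σ
  · obtain ⟨p, rfl⟩ := hk
    simp [weightedShift_single, star_weightedShift_single, ← hστ, smul_smul, hwv]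
  · have hτk : τ k ∉ Set.range σ := fun h => hk (hrange k h)
    simp [weightedShift_single, star_weightedShift_single_of_notMem_range hσ w hk,
      star_weightedShift_single_of_notMem_range hσ w hτk]

theorem star_weightedShift_mul_self_single (hσ : Injective σ) (w : ℓ^∞(ι, ℂ)) (k : ι) :
    (star (weightedShift hσ w) * weightedShift hσ w) (lp.single 2 k 1) =
      ((‖w k‖ ^ 2 : ℝ) : ℂ) • lp.single 2 k 1 := by
  simp [weightedShift_single, star_weightedShift_single, smul_smul, Complex.mul_conj']

theorem weightedShift_mul_star_single (hσ : Injective σ) (w : ℓ^∞(ι, ℂ)) (d : ι → ℝ)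
    (hd : ∀ m, d (σ m) = ‖w m‖ ^ 2) (hd₀ : ∀ k ∉ Set.range σ, d k = 0) (k : ι) :
    (weightedShift hσ w * star (weightedShift hσ w)) (lp.single 2 k 1) =
      (d k : ℂ) • lp.single 2 k 1 := by
  by_cases hk : k ∈ Set.range σ
  · obtain ⟨p, rfl⟩ := hk
    simp [weightedShift_single, star_weightedShift_single, smul_smul, hd, Complex.conj_mul']
  · simp [star_weightedShift_single_of_notMem_range hσ w hk, hd₀ k hk]

end WeightedShift

theorem Fin.sum_Ioi_sub_succ {M : Type*} [AddCommGroup M] {n : ℕ} (F : ℕ → M)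
    (i : Fin (n + 1)) :
    ∑ j ∈ Ioi i, (F j - F (j + 1)) = F (i + 1) - F (n + 1) := by
  have hmap := Finset.sum_map (Ioi i) Fin.valEmbedding (fun t => F t - F (t + 1))
  rw [Fin.map_valEmbedding_Ioi, ← Finset.Ico_add_one_left_eq_Ioo] at hmap
  have htele := Finset.sum_Ico_sub (fun t => -F t) (show (i : ℕ) + 1 ≤ n + 1 by omega)
  simp only [neg_sub_neg] at htele
  simpa [htele] using hmap.symm

namespace QSphere

variable {n : ℕ}

def shift (i : Fin (n + 1)) (k : (Fin n → ℕ) × ℤ) : (Fin n → ℕ) × ℤ :=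
  Fin.lastCases (k.1, k.2 + 1) (fun i => (update k.1 i (k.1 i + 1), k.2)) i

@[simp]
theorem shift_castSucc (i : Fin n) (k : (Fin n → ℕ) × ℤ) :
    shift i.castSucc k = (update k.1 i (k.1 i + 1), k.2) := by
  simp [shift]

@[simp]
theorem shift_last (k : (Fin n → ℕ) × ℤ) : shift (Fin.last n) k = (k.1, k.2 + 1) := by
  simp [shift]

theorem shift_fst_apply_of_ne {i : Fin n} {j : Fin (n + 1)} (h : j ≠ i.castSucc)
    (k : (Fin n → ℕ) × ℤ) : (shift j k).1 i = k.1 i := by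
  induction j using Fin.lastCases with
  | last => simp
  | cast j => simp [update_of_ne (fun hij : i = j => h (hij ▸ rfl))]

theorem shift_injective (i : Fin (n + 1)) : Injective (shift i) := by
  induction i using Fin.lastCases with
  | last => intro a b h; simpa [Prod.ext_iff] using h
  | cast i =>
    intro a b h
    simp only [shift_castSucc, Prod.mk.injEq] at h
    refine Prod.ext (funext fun j => ?_) h.2
    have hj := congrFun h.1 j
    by_cases hji : j = i
    · subst hji; simpa using hj
    · simpa [update_of_ne hji] using hj

theorem shift_comm (i j : Fin (n + 1)) (k : (Fin n → ℕ) × ℤ) :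
    shift i (shift j k) = shift j (shift i k) := by
  induction i using Fin.lastCases with
  | last => induction j using Fin.lastCases <;> simp
  | cast i =>
    induction j using Fin.lastCases with
    | last => simp
    | cast j =>
      by_cases hij : i = j
      · rw [hij]
      · simp [update_of_ne hij, update_of_ne (Ne.symm hij), update_comm hij]

theorem mem_range_shift_castSucc {i : Fin n} {k : (Fin n → ℕ) × ℤ} :
    k ∈ Set.range (shift i.castSucc) ↔ k.1 i ≠ 0 := by
  constructor
  · rintro ⟨p, rfl⟩
    simp
  · intro hk
    refine ⟨(update k.1 i (k.1 i - 1), k.2), ?_⟩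
    simp [Nat.sub_add_cancel (Nat.one_le_iff_ne_zero.2 hk)]

theorem shift_last_surjective : Surjective (shift (Fin.last n)) :=
  fun k => ⟨(k.1, k.2 - 1), by simp⟩

theorem mem_range_shift_of_shift_mem_range {i j : Fin (n + 1)} (hij : i ≠ j)
    {k : (Fin n → ℕ) × ℤ} (h : shift j k ∈ Set.range (shift i)) : k ∈ Set.range (shift i) := by
  induction i using Fin.lastCases with
  | last => exact shift_last_surjective k
  | cast i =>
    rw [mem_range_shift_castSucc] at h ⊢
    rwa [shift_fst_apply_of_ne hij.symm] at h

def partialSum (x : Fin n → ℕ) (t : ℕ) : ℕ :=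
  ∑ m ∈ univ.filter (fun m : Fin n => (m : ℕ) < t), x m

theorem partialSum_zero (x : Fin n → ℕ) : partialSum x 0 = 0 := by
  simp [partialSum]

theorem partialSum_eq_sum_Iio (x : Fin n → ℕ) (i : Fin n) :
    partialSum x i = ∑ m ∈ Iio i, x m := by
  simp only [partialSum]
  congr 1
  ext m
  simp

theorem partialSum_of_le (x : Fin n → ℕ) {t : ℕ} (ht : n ≤ t) : partialSum x t = ∑ m, x m := by
  simp only [partialSum]
  congr 1
  ext m
  simpa using m.isLt.trans_le ht

theorem partialSum_succ (x : Fin n → ℕ) (i : Fin n) :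
    partialSum x (i + 1) = partialSum x i + x i := by
  have hfilter : univ.filter (fun m : Fin n => (m : ℕ) < i + 1) =
      insert i (univ.filter fun m : Fin n => (m : ℕ) < i) := by
    ext m
    simp only [mem_filter, mem_univ, true_and, mem_insert, Fin.ext_iff]
    omega
  rw [partialSum, hfilter, sum_insert (by simp), add_comm, partialSum]

theorem partialSum_shift_of_le (k : (Fin n → ℕ) × ℤ) {i : Fin (n + 1)} {t : ℕ}
    (h : t ≤ i) : partialSum (shift i k).1 t = partialSum k.1 t := by
  induction i using Fin.lastCases with
  | last => simp
  | cast i =>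
    refine sum_congr rfl fun m hm => ?_
    have hmi : m ≠ i := by
      rintro rfl
      simp at hm h
      omega
    simp [update_of_ne hmi]

theorem partialSum_shift_of_lt (k : (Fin n → ℕ) × ℤ) {i : Fin (n + 1)} {t : ℕ}
    (h : i < t) (ht : t ≤ n) : partialSum (shift i k).1 t = partialSum k.1 t + 1 := by
  induction i using Fin.lastCases with
  | last => simp at h; omega
  | cast i =>
    have hi : i ∈ univ.filter fun m : Fin n => (m : ℕ) < t := by simpa using h
    simp only [shift_castSucc, partialSum]
    rw [sum_update_of_mem hi, sum_eq_sum_sdiff_singleton_add hi k.1]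
    ring

noncomputable def level (q : ℝ) (x : Fin n → ℕ) (t : ℕ) : ℝ :=
  if t ≤ n then q ^ (2 * partialSum x t) else 0

theorem level_zero (q : ℝ) (x : Fin n → ℕ) : level q x 0 = 1 := by
  simp [level, partialSum_zero]

theorem level_of_lt (q : ℝ) (x : Fin n → ℕ) {t : ℕ} (ht : n < t) : level q x t = 0 :=
  if_neg ht.not_ge

theorem level_shift_of_le (q : ℝ) (k : (Fin n → ℕ) × ℤ) {i : Fin (n + 1)} {t : ℕ}
    (h : t ≤ i) : level q (shift i k).1 t = level q k.1 t := by
  simp only [level, partialSum_shift_of_le k h]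

theorem level_shift_of_lt (q : ℝ) (k : (Fin n → ℕ) × ℤ) {i : Fin (n + 1)} {t : ℕ}
    (h : i < t) : level q (shift i k).1 t = q ^ 2 * level q k.1 t := by
  by_cases ht : t ≤ n
  · simp only [level, if_pos ht, partialSum_shift_of_lt k h ht]
    ring
  · simp [level, ht]

theorem level_succ_of_notMem_range_shift (q : ℝ) {j : Fin (n + 1)} {k : (Fin n → ℕ) × ℤ}
    (hk : k ∉ Set.range (shift j)) : level q k.1 (j + 1) = level q k.1 j := by
  induction j using Fin.lastCases with
  | last => exact absurd (shift_last_surjective k) hk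
  | cast i =>
    rw [mem_range_shift_castSucc, not_not] at hk
    simp [level, partialSum_succ, hk, i.isLt.le, Nat.succ_le_of_lt i.isLt]

noncomputable def weight (q : ℝ) (i : Fin (n + 1)) (k : (Fin n → ℕ) × ℤ) : ℝ :=
  q ^ partialSum k.1 i * Fin.lastCases 1 (fun i => √(1 - q ^ (2 * (k.1 i + 1)))) i

theorem weight_castSucc (q : ℝ) (i : Fin n) (k : (Fin n → ℕ) × ℤ) :
    weight q i.castSucc k = q ^ (∑ m ∈ Iio i, k.1 m) * √(1 - q ^ (2 * (k.1 i + 1))) := by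
  simp [weight, partialSum_eq_sum_Iio]

theorem weight_last (q : ℝ) (k : (Fin n → ℕ) × ℤ) :
    weight q (Fin.last n) k = q ^ (∑ m, k.1 m) := by
  simp [weight, partialSum_of_le]

theorem abs_weight_le_one {q : ℝ} (hq : |q| ≤ 1) (i : Fin (n + 1)) (k : (Fin n → ℕ) × ℤ) :
    |weight q i k| ≤ 1 := by
  rw [weight, abs_mul, abs_pow]
  refine mul_le_one₀ (pow_le_one₀ (abs_nonneg q) hq) (abs_nonneg _) ?_
  induction i using Fin.lastCases with
  | last => simp
  | cast i =>
    rw [Fin.lastCases_castSucc, abs_of_nonneg (Real.sqrt_nonneg _), Real.sqrt_le_one]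
    have : 0 ≤ q ^ (2 * (k.1 i + 1)) := by rw [pow_mul]; positivity
    linarith

theorem weight_sq {q : ℝ} (hq : |q| ≤ 1) (i : Fin (n + 1)) (k : (Fin n → ℕ) × ℤ) :
    weight q i k ^ 2 = level q k.1 i - q ^ 2 * level q k.1 (i + 1) := by
  induction i using Fin.lastCases with
  | last => simp [weight, level, ← pow_mul, mul_comm]
  | cast i =>
    have hsqrt : 0 ≤ 1 - q ^ (2 * (k.1 i + 1)) := by
      rw [pow_mul, sub_nonneg]
      exact pow_le_one₀ (sq_nonneg q) (sq_le_one_iff_abs_le_one q |>.2 hq)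
    simp only [weight, Fin.lastCases_castSucc, Fin.val_castSucc, mul_pow,
      Real.sq_sqrt hsqrt, level, if_pos i.isLt.le, if_pos (Nat.succ_le_of_lt i.isLt),
      partialSum_succ]
    ring

theorem weight_shift_of_lt (q : ℝ) {i j : Fin (n + 1)} (h : i < j) (k : (Fin n → ℕ) × ℤ) :
    weight q j (shift i k) = q * weight q j k := by
  have hshift : partialSum (shift i k).1 j = partialSum k.1 j + 1 :=
    partialSum_shift_of_lt k h (Nat.lt_succ_iff.1 j.isLt)
  induction j using Fin.lastCases with
  | last =>
    simp only [weight, Fin.lastCases_last, hshift, mul_one]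
    ring
  | cast j =>
    simp only [weight, hshift, Fin.lastCases_castSucc, shift_fst_apply_of_ne h.ne]
    ring

theorem weight_shift_of_gt (q : ℝ) {i j : Fin (n + 1)} (h : j < i) (k : (Fin n → ℕ) × ℤ) :
    weight q j (shift i k) = weight q j k := by
  induction j using Fin.lastCases with
  | last => exact absurd h (Fin.le_last i).not_gt
  | cast j =>
    simp only [weight, partialSum_shift_of_le k h.le, Fin.lastCases_castSucc,
      shift_fst_apply_of_ne h.ne']

variable {q : ℝ}

noncomputable def weightSeq (hq : |q| ≤ 1) (i : Fin (n + 1)) : ℓ^∞((Fin n → ℕ) × ℤ, ℂ) :=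
  ⟨fun k => (weight q i k : ℂ), memℓp_infty ⟨1, by
    rintro _ ⟨k, rfl⟩
    simpa using abs_weight_le_one hq i k⟩⟩

@[simp]
theorem weightSeq_apply (hq : |q| ≤ 1) (i : Fin (n + 1)) (k : (Fin n → ℕ) × ℤ) :
    weightSeq hq i k = weight q i k := rfl

noncomputable def generator (hq : |q| ≤ 1) (i : Fin (n + 1)) : QSphereL2 n →L[ℂ] QSphereL2 n :=
  weightedShift (shift_injective i) (weightSeq hq i)

theorem generator_single (hq : |q| ≤ 1) (i : Fin (n + 1)) (k : (Fin n → ℕ) × ℤ) :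
    generator hq i (QSphereL2.e k) = (weight q i k : ℂ) • QSphereL2.e (shift i k) :=
  weightedShift_single _ _ k

theorem generator_mul_generator_of_lt (hq : |q| ≤ 1) {i j : Fin (n + 1)} (h : i < j) :
    generator hq j * generator hq i = (q : ℂ) • (generator hq i * generator hq j) :=
  weightedShift_mul_weightedShift _ _ _ _ (fun k => shift_comm j i k) q fun k => by
    simp only [weightSeq_apply, weight_shift_of_lt q h, weight_shift_of_gt q h]
    push_cast
    ring

theorem star_generator_mul_generator_of_ne (hq : |q| ≤ 1) {i j : Fin (n + 1)} (h : i ≠ j) :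
    star (generator hq i) * generator hq j = (q : ℂ) • (generator hq j * star (generator hq i)) :=
  star_weightedShift_mul_weightedShift _ _ _ _ (fun k => shift_comm i j k)
    (fun _ => mem_range_shift_of_shift_mem_range h) q fun k => by
    simp only [weightSeq_apply, Complex.conj_ofReal]
    rcases h.lt_or_gt with h | h <;>
    · rw [weight_shift_of_lt q h, weight_shift_of_gt q h]
      push_cast
      ring

theorem star_generator_mul_self_single (hq : |q| ≤ 1) (i : Fin (n + 1)) (k : (Fin n → ℕ) × ℤ) :
    (star (generator hq i) * generator hq i) (QSphereL2.e k) =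
      ((weight q i k ^ 2 : ℝ) : ℂ) • QSphereL2.e k := by
  have h := star_weightedShift_mul_self_single (shift_injective i) (weightSeq hq i) k
  rwa [weightSeq_apply, Complex.norm_real, Real.norm_eq_abs, sq_abs] at h

theorem generator_mul_star_single (hq : |q| ≤ 1) (i : Fin (n + 1)) (k : (Fin n → ℕ) × ℤ) :
    (generator hq i * star (generator hq i)) (QSphereL2.e k) =
      ((level q k.1 i - level q k.1 (i + 1) : ℝ) : ℂ) • QSphereL2.e k := by
  have hd (m : (Fin n → ℕ) × ℤ) : level q (shift i m).1 i - level q (shift i m).1 (i + 1) =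
      ‖weightSeq hq i m‖ ^ 2 := by
    rw [level_shift_of_le q m le_rfl, level_shift_of_lt q m (Nat.lt_succ_self _), weightSeq_apply,
      Complex.norm_real, Real.norm_eq_abs, sq_abs, weight_sq hq]
  have hd₀ (k : (Fin n → ℕ) × ℤ) (hk : k ∉ Set.range (shift i)) :
      level q k.1 i - level q k.1 (i + 1) = 0 := by
    rw [level_succ_of_notMem_range_shift q hk, sub_self]
  exact weightedShift_mul_star_single (shift_injective i) (weightSeq hq i)
    (fun k => level q k.1 i - level q k.1 (i + 1)) hd hd₀ k

theorem star_generator_mul_self (hq : |q| ≤ 1) (i : Fin (n + 1)) :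
    star (generator hq i) * generator hq i = generator hq i * star (generator hq i) +
      ((1 - q ^ 2 : ℝ) : ℂ) • ∑ j ∈ Ioi i, generator hq j * star (generator hq j) := by
  refine lp.ext_continuousLinearMap_single_one fun k => ?_
  have htele := Fin.sum_Ioi_sub_succ (level q k.1) i
  rw [level_of_lt q k.1 n.lt_succ_self, sub_zero] at htele
  simp only [add_apply, smul_apply, _root_.sum_apply, star_generator_mul_self_single,
    generator_mul_star_single, ← Finset.sum_smul, smul_smul, ← add_smul, ← Complex.ofReal_sum,
    ← Complex.ofReal_mul, ← Complex.ofReal_add, htele, weight_sq hq]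
  congr 2
  ring

theorem sum_generator_mul_star (hq : |q| ≤ 1) :
    ∑ j, generator hq j * star (generator hq j) = (1 : QSphereL2 n →L[ℂ] QSphereL2 n) := by
  refine lp.ext_continuousLinearMap_single_one fun k => ?_
  have htele := Fin.sum_univ_eq_sum_range (fun t => level q k.1 t - level q k.1 (t + 1)) (n + 1)
  rw [sum_range_sub', level_zero, level_of_lt q k.1 n.lt_succ_self, sub_zero] at htele
  simp only [_root_.sum_apply, generator_mul_star_single, ← Finset.sum_smul,
    ← Complex.ofReal_sum, htele, Complex.ofReal_one, one_smul, one_apply_eq_self]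

end QSphere

open QSphere in
/-- For `0 < q < 1` there exist bounded operators `Z 0, …, Z n` on
`ℓ²(ℕⁿ × ℤ)` acting on the standard basis vectors by the Vaksman–Soibelman formulas and
satisfying the `q`-sphere relations in `B(ℓ²(ℕⁿ × ℤ))`. -/
theorem qSphere_representation_exists (n : ℕ) (q : ℝ) (hq0 : 0 < q) (hq1 : q < 1) :
    ∃ Z : Fin (n + 1) → (QSphereL2 n →L[ℂ] QSphereL2 n),
      (∀ (i : Fin n) (k : (Fin n → ℕ) × ℤ),
        Z i.castSucc (QSphereL2.e k) =
          (((q ^ (∑ m ∈ Finset.Iio i, k.1 m) *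
              Real.sqrt (1 - q ^ (2 * (k.1 i + 1))) : ℝ)) : ℂ) •
            QSphereL2.e (Function.update k.1 i (k.1 i + 1), k.2)) ∧
      (∀ k : (Fin n → ℕ) × ℤ,
        Z (Fin.last n) (QSphereL2.e k) =
          ((q ^ (∑ m : Fin n, k.1 m) : ℝ) : ℂ) • QSphereL2.e (k.1, k.2 + 1)) ∧
      (∀ i j : Fin (n + 1), i < j → Z j * Z i = (q : ℂ) • (Z i * Z j)) ∧
      (∀ i j : Fin (n + 1), i ≠ j → star (Z i) * Z j = (q : ℂ) • (Z j * star (Z i))) ∧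
      (∀ i : Fin (n + 1), star (Z i) * Z i =
        Z i * star (Z i) + ((1 - q ^ 2 : ℝ) : ℂ) • ∑ j ∈ Finset.Ioi i, Z j * star (Z j)) ∧
      (∑ j : Fin (n + 1), Z j * star (Z j) = 1) := by
  have hq : |q| ≤ 1 := abs_le.2 ⟨by linarith, hq1.le⟩
  refine ⟨generator hq, fun i k => ?_, fun k => ?_, fun _ _ => generator_mul_generator_of_lt hq,
    fun _ _ => star_generator_mul_generator_of_ne hq, star_generator_mul_self hq,
    sum_generator_mul_star hq⟩
  · rw [generator_single, weight_castSucc, shift_castSucc]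
  · rw [generator_single, weight_last, shift_last]
end

section
/- Let q be a real number with 0 < q < 1 and let z₀, …, zₙ be elements of a unital complex *-algebra A satisfying the q-sphere relations. Then for every 0 ≤ i ≤ n and every m ∈ ℕ, the element z_i^m (z_i*)^m belongs to the unital subalgebra of A generated by the elements {z_j z_j* : 0 ≤ j ≤ n}. -/
open Finset

/-- If `0 < q < 1` and `z 0, …, z n` satisfy the `q`-sphere relations in
a unital complex *-algebra `A`, then for every `i` and every `m ∈ ℕ` the element
`(z i)^m ((z i)*)^m` lies in the unital subalgebra generated by the elements
`z j (z j)*`. -/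
theorem qSphere_zmzstarm_mem_adjoin
    {A : Type*} [Ring A] [StarRing A] [Algebra ℂ A] [StarModule ℂ A]
    {n : ℕ} (q : ℝ) (hq0 : 0 < q) (hq1 : q < 1) (z : Fin (n + 1) → A)
    (rel1 : ∀ i j : Fin (n + 1), i < j → z j * z i = (q : ℂ) • (z i * z j))
    (rel2 : ∀ i j : Fin (n + 1), i ≠ j → star (z i) * z j = (q : ℂ) • (z j * star (z i)))
    (rel3 : ∀ i : Fin (n + 1), star (z i) * z i =
      z i * star (z i) + ((1 - q ^ 2 : ℝ) : ℂ) • ∑ j ∈ Finset.Ioi i, z j * star (z j))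
    (rel4 : ∑ j : Fin (n + 1), z j * star (z j) = 1) :
    ∀ (i : Fin (n + 1)) (m : ℕ),
      (z i) ^ m * (star (z i)) ^ m ∈
        Algebra.adjoin ℂ (Set.range fun j : Fin (n + 1) => z j * star (z j)) := by
  intro i m
  set S := Algebra.adjoin ℂ (Set.range fun j : Fin (n + 1) => z j * star (z j)) with hSdef
  have hqC : (q : ℂ) ≠ 0 := by exact_mod_cast hq0.ne'
  have hw : ∀ j, z j * star (z j) ∈ S := fun j => Algebra.subset_adjoin ⟨j, rfl⟩
  -- moving z i past w j for i < j
  have moveGT : ∀ j : Fin (n + 1), i < j →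
      z i * (z j * star (z j)) = ((q : ℂ)⁻¹ * (q : ℂ)⁻¹) • ((z j * star (z j)) * z i) := by
    intro j hij
    have e1 : z i * z j = (q : ℂ)⁻¹ • (z j * z i) := by
      rw [rel1 i j hij, smul_smul, inv_mul_cancel₀ hqC, one_smul]
    have e2 : z i * star (z j) = (q : ℂ)⁻¹ • (star (z j) * z i) := by
      rw [rel2 j i hij.ne', smul_smul, inv_mul_cancel₀ hqC, one_smul]
    calc z i * (z j * star (z j)) = (z i * z j) * star (z j) := by rw [mul_assoc]
      _ = (q : ℂ)⁻¹ • (z j * (z i * star (z j))) := by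
          rw [e1, smul_mul_assoc, mul_assoc]
      _ = ((q : ℂ)⁻¹ * (q : ℂ)⁻¹) • ((z j * star (z j)) * z i) := by
          rw [e2, mul_smul_comm, smul_smul, mul_assoc]
  -- moving z i past w j in general
  have move : ∀ j : Fin (n + 1), ∃ b ∈ S, z i * (z j * star (z j)) = b * z i := by
    intro j
    rcases lt_trichotomy i j with hij | hij | hij
    · exact ⟨((q : ℂ)⁻¹ * (q : ℂ)⁻¹) • (z j * star (z j)),
        SMulMemClass.smul_mem _ (hw j), by rw [moveGT j hij, smul_mul_assoc]⟩
    · subst hij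
      refine ⟨z i * star (z i) - (((1 - q ^ 2 : ℝ) : ℂ) * ((q : ℂ)⁻¹ * (q : ℂ)⁻¹)) •
          ∑ j ∈ Finset.Ioi i, z j * star (z j),
        sub_mem (hw i) (SMulMemClass.smul_mem _ (sum_mem fun j _ => hw j)), ?_⟩
      have e3 : z i * star (z i) = star (z i) * z i -
          ((1 - q ^ 2 : ℝ) : ℂ) • ∑ j ∈ Finset.Ioi i, z j * star (z j) := by
        rw [rel3 i]; abel
      calc z i * (z i * star (z i))
          = z i * (star (z i) * z i) -
            ((1 - q ^ 2 : ℝ) : ℂ) • ∑ j ∈ Finset.Ioi i, z i * (z j * star (z j)) := by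
            rw [e3, mul_sub, mul_smul_comm, Finset.mul_sum]
        _ = (z i * star (z i)) * z i -
            ((1 - q ^ 2 : ℝ) : ℂ) • ∑ j ∈ Finset.Ioi i,
              ((q : ℂ)⁻¹ * (q : ℂ)⁻¹) • ((z j * star (z j)) * z i) := by
            rw [mul_assoc]
            congr 2
            exact Finset.sum_congr rfl fun j hj => moveGT j (Finset.mem_Ioi.mp hj)
        _ = (z i * star (z i) - (((1 - q ^ 2 : ℝ) : ℂ) * ((q : ℂ)⁻¹ * (q : ℂ)⁻¹)) •
              ∑ j ∈ Finset.Ioi i, z j * star (z j)) * z i := by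
            rw [← Finset.smul_sum, smul_smul, sub_mul, smul_mul_assoc, Finset.sum_mul]
    · refine ⟨z j * star (z j), hw j, ?_⟩
      have e1 : z i * z j = (q : ℂ) • (z j * z i) := rel1 j i hij
      have e2 : z i * star (z j) = (q : ℂ)⁻¹ • (star (z j) * z i) := by
        rw [rel2 j i hij.ne, smul_smul, inv_mul_cancel₀ hqC, one_smul]
      calc z i * (z j * star (z j)) = (z i * z j) * star (z j) := by rw [mul_assoc]
        _ = (q : ℂ) • (z j * (z i * star (z j))) := by rw [e1, smul_mul_assoc, mul_assoc]
        _ = ((q : ℂ) * (q : ℂ)⁻¹) • ((z j * star (z j)) * z i) := by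
            rw [e2, mul_smul_comm, smul_smul, mul_assoc]
        _ = (z j * star (z j)) * z i := by rw [mul_inv_cancel₀ hqC, one_smul]
  -- moving z i past any element of S
  have moveS : ∀ a ∈ S, ∃ b ∈ S, z i * a = b * z i := by
    intro a ha
    induction ha using Algebra.adjoin_induction with
    | mem x hx =>
        obtain ⟨j, rfl⟩ := hx
        exact move j
    | algebraMap c =>
        exact ⟨algebraMap ℂ A c, Subalgebra.algebraMap_mem _ c,
          by rw [Algebra.commutes]⟩
    | add x y hx hy ihx ihy =>
        obtain ⟨b1, hb1, e1⟩ := ihx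
        obtain ⟨b2, hb2, e2⟩ := ihy
        exact ⟨b1 + b2, add_mem hb1 hb2, by rw [mul_add, e1, e2, add_mul]⟩
    | mul x y hx hy ihx ihy =>
        obtain ⟨b1, hb1, e1⟩ := ihx
        obtain ⟨b2, hb2, e2⟩ := ihy
        exact ⟨b1 * b2, mul_mem hb1 hb2,
          by rw [← mul_assoc, e1, mul_assoc, e2, ← mul_assoc]⟩
  induction m with
  | zero => simpa using one_mem S
  | succ m ih =>
      obtain ⟨b, hb, e⟩ := moveS _ ih
      have : z i ^ (m + 1) * star (z i) ^ (m + 1) =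
          b * (z i * star (z i)) := by
        rw [pow_succ', pow_succ, ← mul_assoc, mul_assoc (z i), e, mul_assoc]
      rw [this]
      exact mul_mem hb (hw i)
end

section
/- Let B be a unital complex *-algebra containing elements P₀, …, Pₙ and S_{i,j} for 0 ≤ i ≤ j ≤ n satisfying the Cuntz–Krieger relations of the graph Σₙ: P_i* = P_i, P_i P_j = δ_{ij} P_i; S_{i,j}* S_{k,l} = δ_{ik} δ_{jl} P_j; ∑_{j=i}^{n} S_{i,j} S_{i,j}* = P_i for all i; and P_i S_{i,j} = S_{i,j} = S_{i,j} P_j. Define Q_i := P_i for 0 ≤ i ≤ n, T_i := S_{i,i} for 0 ≤ i ≤ n, and R_j := ∑_{k=j+1}^{n} S_{j,k} S_{j+1,k}* for 0 ≤ j < n. Then these elements satisfy the Cuntz–Krieger relations of the graph Σ̃ₙ: Q_i* = Q_i and Q_i Q_j = δ_{ij} Q_i; T_i* T_i = Q_i for all i; R_j* R_j = Q_{j+1} for all 0 ≤ j < n; T_j T_j* + R_j R_j* = Q_j for 0 ≤ j < n; Tₙ Tₙ* = Qₙ; Q_i T_i = T_i = T_i Q_i for all i; and Q_j R_j = R_j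 = R_j Q_{j+1} for 0 ≤ j < n. -/
open Finset

/-- Given a Cuntz–Krieger family `{P i, S i j (i ≤ j)}` for the graph
`Σₙ` in a unital complex *-algebra `B`, the elements `Q i := P i`, `T i := S i i` and
`R j := ∑_{k=j+1}^{n} S j k (S (j+1) k)*` form a Cuntz–Krieger family for the graph
`Σ̃ₙ`. -/
theorem sigma_to_sigmaTilde_CKfamily
    {B : Type*} [Ring B] [StarRing B] [Algebra ℂ B] [StarModule ℂ B]
    {n : ℕ} (P : Fin (n + 1) → B) (S : Fin (n + 1) → Fin (n + 1) → B)
    (hP_star : ∀ i, star (P i) = P i)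
    (hP_mul : ∀ i j, P i * P j = if i = j then P i else 0)
    (hS1 : ∀ i j k l : Fin (n + 1), i ≤ j → k ≤ l →
      star (S i j) * S k l = if i = k ∧ j = l then P j else 0)
    (hS2 : ∀ i : Fin (n + 1), ∑ j ∈ Finset.Ici i, S i j * star (S i j) = P i)
    (hS3 : ∀ i j : Fin (n + 1), i ≤ j → P i * S i j = S i j ∧ S i j * P j = S i j)
    (Q : Fin (n + 1) → B) (T : Fin (n + 1) → B) (R : Fin n → B)
    (hQ : ∀ i, Q i = P i)
    (hT : ∀ i, T i = S i i)
    (hR : ∀ j : Fin n, R j =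
      ∑ k ∈ Finset.Ioi j.castSucc, S j.castSucc k * star (S j.succ k)) :
    (∀ i, star (Q i) = Q i) ∧
    (∀ i j, Q i * Q j = if i = j then Q i else 0) ∧
    (∀ i, star (T i) * T i = Q i) ∧
    (∀ j : Fin n, star (R j) * R j = Q j.succ) ∧
    (∀ j : Fin n, T j.castSucc * star (T j.castSucc) + R j * star (R j) = Q j.castSucc) ∧
    (T (Fin.last n) * star (T (Fin.last n)) = Q (Fin.last n)) ∧
    (∀ i, Q i * T i = T i ∧ T i * Q i = T i) ∧
    (∀ j : Fin n, Q j.castSucc * R j = R j ∧ R j * Q j.succ = R j) := by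
  -- auxiliary facts
  have hIoi : ∀ j : Fin n, Finset.Ioi j.castSucc = Finset.Ici j.succ := by
    intro j; ext a; simp [Fin.castSucc_lt_iff_succ_le]
  have hstarP : ∀ i j : Fin (n + 1), i ≤ j → star (S i j) * P i = star (S i j) := by
    intro i j h
    have := congrArg star (hS3 i j h).1
    rwa [star_mul, hP_star] at this
  have hPstar : ∀ i j : Fin (n + 1), i ≤ j → P j * star (S i j) = star (S i j) := by
    intro i j h
    have := congrArg star (hS3 i j h).2
    rwa [star_mul, hP_star] at this
  -- R * star R
  have hRRs : ∀ j : Fin n,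
      R j * star (R j) = ∑ k ∈ Finset.Ioi j.castSucc, S j.castSucc k * star (S j.castSucc k) := by
    intro j
    rw [hR, star_sum, Finset.sum_mul_sum]
    trans (∑ k ∈ Finset.Ioi j.castSucc, ∑ l ∈ Finset.Ioi j.castSucc,
        if k = l then S j.castSucc l * star (S j.castSucc l) else 0)
    swap
    · exact Finset.sum_congr rfl fun k hk => by rw [Finset.sum_ite_eq, if_pos hk]
    refine Finset.sum_congr rfl fun k hk => Finset.sum_congr rfl fun l hl => ?_
    · -- pointwise term
      have hk : j.castSucc < k := Finset.mem_Ioi.mp hk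
      have hl : j.castSucc < l := Finset.mem_Ioi.mp hl
      have hks : j.succ ≤ k := Fin.castSucc_lt_iff_succ_le.mp hk
      have hls : j.succ ≤ l := Fin.castSucc_lt_iff_succ_le.mp hl
      show S j.castSucc k * star (S j.succ k) * star (S j.castSucc l * star (S j.succ l))
          = if k = l then S j.castSucc l * star (S j.castSucc l) else 0
      rw [star_mul, star_star, mul_assoc, ← mul_assoc (star (S j.succ k)),
        hS1 j.succ k j.succ l hks hls]
      by_cases h : k = l
      · subst h
        simp only [and_self, if_true]
        rw [hPstar j.castSucc k hk.le]
      · simp [h]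
  -- star R * R
  have hRsR : ∀ j : Fin n,
      star (R j) * R j = ∑ k ∈ Finset.Ioi j.castSucc, S j.succ k * star (S j.succ k) := by
    intro j
    rw [hR, star_sum, Finset.sum_mul_sum]
    trans (∑ k ∈ Finset.Ioi j.castSucc, ∑ l ∈ Finset.Ioi j.castSucc,
        if k = l then S j.succ l * star (S j.succ l) else 0)
    swap
    · exact Finset.sum_congr rfl fun k hk => by rw [Finset.sum_ite_eq, if_pos hk]
    refine Finset.sum_congr rfl fun k hk => Finset.sum_congr rfl fun l hl => ?_
    · have hk : j.castSucc < k := Finset.mem_Ioi.mp hk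
      have hl : j.castSucc < l := Finset.mem_Ioi.mp hl
      have hks : j.succ ≤ k := Fin.castSucc_lt_iff_succ_le.mp hk
      have hls : j.succ ≤ l := Fin.castSucc_lt_iff_succ_le.mp hl
      show star (S j.castSucc k * star (S j.succ k)) * (S j.castSucc l * star (S j.succ l))
          = if k = l then S j.succ l * star (S j.succ l) else 0
      rw [star_mul, star_star, mul_assoc, ← mul_assoc (star (S j.castSucc k)),
        hS1 j.castSucc k j.castSucc l hk.le hl.le]
      by_cases h : k = l
      · subst h
        simp only [and_self, if_true]
        rw [hPstar j.succ k hks]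
      · simp [h]
  refine ⟨?_, ?_, ?_, ?_, ?_, ?_, ?_, ?_⟩
  · intro i; rw [hQ, hP_star]
  · intro i j; simp only [hQ]; rw [hP_mul]
  · intro i
    rw [hT, hQ, hS1 i i i i le_rfl le_rfl, if_pos ⟨rfl, rfl⟩]
  · intro j
    rw [hRsR, hQ, hIoi, hS2]
  · intro j
    rw [hRRs, hT, hQ, ← hS2 j.castSucc, ← Finset.Ioi_insert,
      Finset.sum_insert (Finset.notMem_Ioi_self)]
  · have hlast : Finset.Ici (Fin.last n) = {Fin.last n} := by
      ext a
      constructor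
      · intro h; simp only [mem_Ici] at h; simp [le_antisymm h (Fin.le_last a)]
      · intro h; simp only [mem_singleton] at h; subst h; simp
    rw [hT, hQ, ← hS2 (Fin.last n), hlast, Finset.sum_singleton]
  · intro i
    rw [hT, hQ]
    exact hS3 i i le_rfl
  · intro j
    constructor
    · rw [hQ, hR, Finset.mul_sum]
      refine Finset.sum_congr rfl fun k hk => ?_
      have hk : j.castSucc < k := Finset.mem_Ioi.mp hk
      rw [← mul_assoc, (hS3 j.castSucc k hk.le).1]
    · rw [hQ, hR, Finset.sum_mul]
      refine Finset.sum_congr rfl fun k hk => ?_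
      have hk : j.castSucc < k := Finset.mem_Ioi.mp hk
      have hks : j.succ ≤ k := Fin.castSucc_lt_iff_succ_le.mp hk
      rw [mul_assoc, hstarP j.succ k hks]
end

section
/- Let A be a unital complex *-algebra and z₀, …, zₙ ∈ A elements satisfying the q-sphere relations with q = 0, i.e., z_i z_j = 0 for all i > j; z_i* z_j = 0 for all i ≠ j; z_i* z_i = ∑_{j=i}^{n} z_j z_j* for all i; and ∑_{j=0}^{n} z_j z_j* = 1. Define P_i := z_i z_i* for 0 ≤ i ≤ n and S_{i,j} := z_i z_j z_j* for 0 ≤ i ≤ j ≤ n. Then these elements satisfy the Cuntz–Krieger relations of the graph Σₙ: P_i* = P_i and P_i P_j = δ_{ij} P_i; S_{i,j}* S_{k,l} = δ_{ik} δ_{jl} P_j for all i ≤ j and k ≤ l; ∑_{j=i}^{n} S_{i,j} S_{i,j}* = P_i for all i; and P_i S_{i,j} = S_{i,j} = S_{i,j} P_j. Moreover, ∑_{j=i}^{n} S_{i,j} = z_i for every 0 ≤ i ≤ n. -/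
open Finset

/-- If `z 0, …, z n` satisfy the `q`-sphere relations with `q = 0` in a
unital complex *-algebra `A`, then `P i := z i (z i)*` and `S i j := z i (z j (z j)*)`
(for `i ≤ j`) form a Cuntz–Krieger family for the graph `Σₙ`, and moreover
`∑_{j=i}^{n} S i j = z i` for every `i`. -/
theorem qSphereZero_CuntzKrieger_family
    {A : Type*} [Ring A] [StarRing A] [Algebra ℂ A] [StarModule ℂ A]
    {n : ℕ} (z : Fin (n + 1) → A)
    (rel1 : ∀ i j : Fin (n + 1), j < i → z i * z j = 0)
    (rel2 : ∀ i j : Fin (n + 1), i ≠ j → star (z i) * z j = 0)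
    (rel3 : ∀ i : Fin (n + 1), star (z i) * z i = ∑ j ∈ Finset.Ici i, z j * star (z j))
    (rel4 : ∑ j : Fin (n + 1), z j * star (z j) = 1)
    (P : Fin (n + 1) → A) (S : Fin (n + 1) → Fin (n + 1) → A)
    (hP : ∀ i, P i = z i * star (z i))
    (hS : ∀ i j : Fin (n + 1), i ≤ j → S i j = z i * (z j * star (z j))) :
    (∀ i, star (P i) = P i) ∧
    (∀ i j, P i * P j = if i = j then P i else 0) ∧
    (∀ i j k l : Fin (n + 1), i ≤ j → k ≤ l →
      star (S i j) * S k l = if i = k ∧ j = l then P j else 0) ∧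
    (∀ i : Fin (n + 1), ∑ j ∈ Finset.Ici i, S i j * star (S i j) = P i) ∧
    (∀ i j : Fin (n + 1), i ≤ j → P i * S i j = S i j ∧ S i j * P j = S i j) ∧
    (∀ i : Fin (n + 1), ∑ j ∈ Finset.Ici i, S i j = z i) := by
  -- key identity : z i * star (z i) * z i = z i
  have key : ∀ i, z i * star (z i) * z i = z i := by
    intro i
    have h1 : (∑ j : Fin (n + 1), z j * star (z j) * z i) = z i := by
      rw [← Finset.sum_mul, rel4, one_mul]
    calc z i * star (z i) * z i
        = ∑ j : Fin (n + 1), z j * star (z j) * z i := by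
          rw [Finset.sum_eq_single i]
          · intro j _ hj
            rw [mul_assoc, rel2 j i hj, mul_zero]
          · simp
      _ = z i := h1
  have idem : ∀ i, (z i * star (z i)) * (z i * star (z i)) = z i * star (z i) := by
    intro i
    rw [← mul_assoc, key]
  have orth : ∀ i j : Fin (n + 1), i ≠ j →
      (z i * star (z i)) * (z j * star (z j)) = 0 := by
    intro i j h
    rw [mul_assoc, ← mul_assoc (star (z i)), rel2 i j h, zero_mul, mul_zero]
  -- Q j * (star (z i) * z i) = Q j for i ≤ j
  have QssQ : ∀ i j : Fin (n + 1), i ≤ j →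
      (z j * star (z j)) * (star (z i) * z i) = z j * star (z j) := by
    intro i j h
    rw [rel3 i, Finset.mul_sum, Finset.sum_eq_single j]
    · exact idem j
    · intro m _ hm
      exact orth j m (fun e => hm e.symm)
    · intro hj
      exact absurd (Finset.mem_Ici.mpr h) hj
  refine ⟨?_, ?_, ?_, ?_, ?_, ?_⟩
  · -- star (P i) = P i
    intro i
    rw [hP, star_mul, star_star]
  · -- P i * P j = δ
    intro i j
    rw [hP, hP]
    split_ifs with h
    · subst h; exact idem i
    · exact orth i j h
  · -- S* S
    intro i j k l hij hkl
    rw [hS i j hij, hS k l hkl, hP]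
    have hstar : star (z i * (z j * star (z j))) = (z j * star (z j)) * star (z i) := by
      rw [star_mul, star_mul, star_star]
    rw [hstar]
    by_cases hik : i = k
    · subst hik
      have : (z j * star (z j)) * star (z i) * (z i * (z l * star (z l)))
          = ((z j * star (z j)) * (star (z i) * z i)) * (z l * star (z l)) := by
        simp only [mul_assoc]
      rw [this, QssQ i j hij]
      by_cases hjl : j = l
      · subst hjl
        simp only [and_self, if_true]
        exact idem j
      · rw [if_neg (fun h => hjl h.2)]
        exact orth j l hjl
    · rw [if_neg (fun h => hik h.1)]
      have : star (z i) * (z k * (z l * star (z l)))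
          = (star (z i) * z k) * (z l * star (z l)) := by
        simp only [mul_assoc]
      rw [mul_assoc, this, rel2 i k hik, zero_mul, mul_zero]
  · -- ∑ S S* = P
    intro i
    have hterm : ∀ j ∈ Finset.Ici i, S i j * star (S i j)
        = z i * (z j * star (z j)) * star (z i) := by
      intro j hj
      have hij : i ≤ j := Finset.mem_Ici.mp hj
      rw [hS i j hij, star_mul, star_mul, star_star]
      calc z i * (z j * star (z j)) * ((z j * star (z j)) * star (z i))
          = z i * ((z j * star (z j)) * (z j * star (z j))) * star (z i) := by
            simp only [mul_assoc]
        _ = z i * (z j * star (z j)) * star (z i) := by rw [idem j]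
    rw [Finset.sum_congr rfl hterm, hP]
    calc ∑ j ∈ Finset.Ici i, z i * (z j * star (z j)) * star (z i)
        = z i * (∑ j ∈ Finset.Ici i, z j * star (z j)) * star (z i) := by
          rw [Finset.mul_sum, Finset.sum_mul]
      _ = z i * (star (z i) * z i) * star (z i) := by rw [rel3 i]
      _ = (z i * star (z i)) * (z i * star (z i)) := by simp only [mul_assoc]
      _ = z i * star (z i) := idem i
  · -- P S = S = S P
    intro i j hij
    constructor
    · rw [hP, hS i j hij, ← mul_assoc, ← mul_assoc, key, mul_assoc]
    · rw [hP, hS i j hij, mul_assoc, idem j]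
  · -- ∑ S = z
    intro i
    have hterm : ∀ j ∈ Finset.Ici i, S i j = z i * (z j * star (z j)) := fun j hj =>
      hS i j (Finset.mem_Ici.mp hj)
    rw [Finset.sum_congr rfl hterm]
    have : (∑ j ∈ Finset.Ici i, z i * (z j * star (z j)))
        = ∑ j : Fin (n + 1), z i * (z j * star (z j)) := by
      apply Finset.sum_subset (Finset.subset_univ _)
      intro x _ hx
      have hxi : x < i := by
        simpa [Finset.mem_Ici] using hx
      rw [← mul_assoc, rel1 i x hxi, zero_mul]
    rw [this, ← Finset.mul_sum, rel4, mul_one]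
end

section
/- Let A be a unital C*-algebra, let t be a real number with 0 < t < 1, and let Y ∈ A satisfy Y*Y = t·(Y Y*) + (1 − t)·1. Then the spectrum of Y Y* is contained in the set {1 − t^k : k ∈ ℕ} ∪ {1}. -/
/-!
Since `b a = t (a b) + (1 - t)` and `σ(a b) \ {0} = σ(b a) \ {0}`, every nonzero `λ ∈ σ(a b)` is
`1 - t + t μ` for some `μ ∈ σ(a b)`. In terms of `u = 1 - λ`: the set `1 - σ(a b)` is closed under
`u ↦ u / t` as long as `u ≠ 1`. If `u ∉ {0} ∪ {t ^ k}`, the orbit `u / t ^ n` never hits `1` and is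
unbounded, which the bounded spectrum does not allow.
-/
open Bornology Filter

theorem eq_zero_or_eq_pow_of_div_mem {𝕜 : Type*} [NormedField 𝕜] {S : Set 𝕜} (hS : IsBounded S)
    {t : 𝕜} (ht0 : t ≠ 0) (ht1 : ‖t‖ < 1) (hdiv : ∀ u ∈ S, u ≠ 1 → u / t ∈ S)
    {u : 𝕜} (hu : u ∈ S) : u = 0 ∨ ∃ k : ℕ, u = t ^ k := by
  by_contra! h
  obtain ⟨hu0, hpow⟩ := h
  have hmem : ∀ n : ℕ, u / t ^ n ∈ S := by
    intro n
    induction n with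
    | zero => simpa using hu
    | succ n ih =>
      rw [pow_succ, ← div_div]
      exact hdiv _ ih fun h ↦ hpow n ((div_eq_one_iff_eq (pow_ne_zero n ht0)).1 h)
  have hgrow : Tendsto (fun n : ℕ ↦ ‖u / t ^ n‖) atTop atTop := by
    simp_rw [norm_div, norm_pow, div_eq_mul_inv, ← inv_pow]
    have ht_inv : 1 < ‖t‖⁻¹ := one_lt_inv_iff₀.2 ⟨norm_pos_iff.2 ht0, ht1⟩
    exact (tendsto_pow_atTop_atTop_of_one_lt ht_inv).const_mul_atTop (norm_pos_iff.2 hu0)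
  obtain ⟨C, hC⟩ := isBounded_iff_forall_norm_le.1 hS
  obtain ⟨n, hn⟩ := (hgrow.eventually_gt_atTop C).exists
  exact (hC _ (hmem n)).not_gt hn

theorem one_sub_div_mem_spectrum_mul {𝕜 A : Type*} [Field 𝕜] [Ring A] [Algebra 𝕜 A] {a b : A}
    {t : 𝕜} (hab : b * a = t • (a * b) + (1 - t) • 1) (ht0 : t ≠ 0) {u : 𝕜}
    (hu : 1 - u ∈ spectrum 𝕜 (a * b)) (hu1 : u ≠ 1) : 1 - u / t ∈ spectrum 𝕜 (a * b) := by
  have hba : 1 - u ∈ spectrum 𝕜 (b * a) := by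
    have : 1 - u ∈ spectrum 𝕜 (a * b) \ {0} := ⟨hu, sub_ne_zero.2 hu1.symm⟩
    rw [spectrum.nonzero_mul_comm] at this
    exact this.1
  rw [hab, ← Algebra.algebraMap_eq_smul_one (A := A), add_comm,
    show 1 - u = (t - u) + (1 - t) by ring, spectrum.add_mem_add_iff,
    show t - u = Units.mk0 t ht0 • (1 - u / t) by simp [field]] at hba
  exact spectrum.smul_mem_smul_iff.1 hba

theorem spectrum_mul_subset_one_sub_pow {𝕜 A : Type*} [NontriviallyNormedField 𝕜] [NormedRing A]
    [NormedAlgebra 𝕜 A] [CompleteSpace A] {a b : A} {t : 𝕜}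
    (hab : b * a = t • (a * b) + (1 - t) • 1) (ht0 : t ≠ 0) (ht1 : ‖t‖ < 1) :
    spectrum 𝕜 (a * b) ⊆ {x | (∃ k : ℕ, x = 1 - t ^ k) ∨ x = 1} := by
  intro x hx
  have hbdd : IsBounded ((1 - ·) ⁻¹' spectrum 𝕜 (a * b)) :=
    (IsometryEquiv.subLeft (1 : 𝕜)).isometry.antilipschitz.isBounded_preimage (spectrum.isBounded _)
  have hx' : 1 - x ∈ (1 - ·) ⁻¹' spectrum 𝕜 (a * b) := by simpa using hx
  rcases eq_zero_or_eq_pow_of_div_mem hbdd ht0 ht1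
    (fun u hu hu1 ↦ one_sub_div_mem_spectrum_mul hab ht0 hu hu1) hx' with h | ⟨k, h⟩
  · exact .inr (sub_eq_zero.1 h).symm
  · exact .inl ⟨k, by rw [← h, sub_sub_cancel]⟩

theorem spectrum_of_qScaled_element_general
    {A : Type*} [NormedRing A] [StarRing A] [NormedAlgebra ℂ A]
    [CompleteSpace A]
    (t : ℝ) (ht0 : 0 < t) (ht1 : t < 1) (Y : A)
    (hY : star Y * Y = (t : ℂ) • (Y * star Y) + ((1 - t : ℝ) : ℂ) • 1) :
    spectrum ℂ (Y * star Y) ⊆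
      {x : ℂ | (∃ k : ℕ, x = 1 - (t : ℂ) ^ k) ∨ x = 1} := by
  push_cast at hY
  refine spectrum_mul_subset_one_sub_pow hY (by exact_mod_cast ht0.ne') ?_
  rwa [Complex.norm_real, Real.norm_of_nonneg ht0.le]

/-- Let `A` be a unital C*-algebra, `0 < t < 1`, and `Y ∈ A` with
`Y* Y = t (Y Y*) + (1 − t) 1`. Then the spectrum of `Y Y*` is contained in
`{1 − t^k : k ∈ ℕ} ∪ {1}`. -/
theorem spectrum_of_qScaled_element
    {A : Type*} [NormedRing A] [StarRing A] [CStarRing A] [NormedAlgebra ℂ A]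
    [StarModule ℂ A] [CompleteSpace A]
    (t : ℝ) (ht0 : 0 < t) (ht1 : t < 1) (Y : A)
    (hY : star Y * Y = (t : ℂ) • (Y * star Y) + ((1 - t : ℝ) : ℂ) • 1) :
    spectrum ℂ (Y * star Y) ⊆
      {x : ℂ | (∃ k : ℕ, x = 1 - (t : ℂ) ^ k) ∨ x = 1} :=
  spectrum_of_qScaled_element_general t ht0 ht1 Y hY
end

section
/- Let n ≥ 1, let q be a real number with 0 < q < 1, and let P be a polynomial in n variables with complex coefficients. If P(q^{m₁}, q^{m₂}, …, q^{mₙ}) = 0 for all natural numbers m₁, …, mₙ with 0 ≤ m₁ ≤ m₂ ≤ … ≤ mₙ, then P = 0. -/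
open MvPolynomial

lemma qpow_inj (q : ℝ) (hq0 : 0 < q) (hq1 : q < 1) :
    Function.Injective (fun k : ℕ => ((q : ℂ)) ^ k) := by
  intro a b h
  have : (q : ℝ) ^ a = q ^ b := by
    have := congrArg Complex.re h
    simpa [← Complex.ofReal_pow] using this
  by_contra hne
  rcases Nat.lt_or_ge a b with hlt | hge
  · exact absurd this (ne_of_gt (pow_lt_pow_right_of_lt_one₀ hq0 hq1 hlt))
  · have hlt : b < a := lt_of_le_of_ne hge (Ne.symm hne)
    exact absurd this.symm (ne_of_gt (pow_lt_pow_right_of_lt_one₀ hq0 hq1 hlt))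

lemma anti_cons (n : ℕ) (m : Fin n → ℕ) (hm : Antitone m) (a : ℕ)
    (ha : ∀ j : Fin n, m j ≤ a) : Antitone (Fin.cons a m : Fin (n + 1) → ℕ) := by
  intro i j hij
  obtain rfl | ⟨i', rfl⟩ := Fin.eq_zero_or_eq_succ i
  · obtain rfl | ⟨j', rfl⟩ := Fin.eq_zero_or_eq_succ j
    · exact le_refl _
    · simpa using ha j'
  · obtain rfl | ⟨j', rfl⟩ := Fin.eq_zero_or_eq_succ j
    · exact absurd (Fin.le_zero_iff.mp hij) (Fin.succ_ne_zero i')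
    · simpa using hm (Fin.succ_le_succ_iff.mp hij)

lemma aux (q : ℝ) (hq0 : 0 < q) (hq1 : q < 1) :
    ∀ (n : ℕ) (P : MvPolynomial (Fin n) ℂ),
      (∀ m : Fin n → ℕ, Antitone m →
        MvPolynomial.eval (fun i => ((q : ℂ) ^ (m i))) P = 0) → P = 0 := by
  intro n
  induction n with
  | zero =>
    intro P h
    obtain ⟨c, rfl⟩ := MvPolynomial.C_surjective (Fin 0) P
    have h0 := h (fun _ => 0) (fun a b _ => le_refl _)
    rw [MvPolynomial.eval_C] at h0
    rw [h0, map_zero]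
  | succ n ih =>
    intro P h
    have hQ : ∀ k, (MvPolynomial.finSuccEquiv ℂ n P).coeff k = 0 := by
      intro k
      apply ih
      intro m hm
      set R : Polynomial ℂ :=
        Polynomial.map (MvPolynomial.eval (fun i => ((q:ℂ) ^ (m i))))
          (MvPolynomial.finSuccEquiv ℂ n P) with hR
      have hR0 : R = 0 := by
        apply Polynomial.eq_zero_of_infinite_isRoot
        set m0 : ℕ := Finset.univ.sup m with hm0
        apply Set.infinite_of_injective_forall_mem
          (f := fun a : ℕ => ((q:ℂ)) ^ (m0 + a))
        · intro a b hab
          exact Nat.add_left_cancel (qpow_inj q hq0 hq1 hab)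
        · intro a
          have hanti : Antitone (Fin.cons (m0 + a) m : Fin (n + 1) → ℕ) :=
            anti_cons n m hm _ (fun j => le_trans (Finset.le_sup (Finset.mem_univ j))
              (Nat.le_add_right _ _))
          have key := h (Fin.cons (m0 + a) m) hanti
          have hfun : (Fin.cons ((q:ℂ) ^ (m0 + a)) (fun i => ((q:ℂ) ^ (m i)))
              : Fin (n + 1) → ℂ) = fun i => (q:ℂ) ^ ((Fin.cons (m0 + a) m : Fin (n + 1) → ℕ) i) := by
            funext i
            refine Fin.cases ?_ ?_ i <;> simp
          have key' : MvPolynomial.eval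
              (Fin.cons ((q:ℂ) ^ (m0 + a)) (fun i => ((q:ℂ) ^ (m i)))) P = 0 := by
            rw [hfun]; exact key
          rw [Set.mem_setOf_eq, Polynomial.IsRoot, hR,
            ← MvPolynomial.eval_eq_eval_mv_eval']
          exact key'
      have := congrArg (fun p => Polynomial.coeff p k) hR0
      simpa [hR, Polynomial.coeff_map] using this
    have : (MvPolynomial.finSuccEquiv ℂ n P) = 0 := Polynomial.ext (by simpa using hQ)
    exact (map_eq_zero_iff _ (MvPolynomial.finSuccEquiv ℂ n).injective).mp this

/-- Let `n ≥ 1` and `0 < q < 1`. If a complex polynomial `P` in `n`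
variables vanishes at every point `(q^{m₁}, …, q^{mₙ})` with natural numbers
`m₁ ≤ m₂ ≤ … ≤ mₙ`, then `P = 0`. -/
theorem mvPolynomial_eq_zero_of_vanishing_on_qPowers
    (n : ℕ) (hn : 1 ≤ n) (q : ℝ) (hq0 : 0 < q) (hq1 : q < 1)
    (P : MvPolynomial (Fin n) ℂ)
    (hvanish : ∀ m : Fin n → ℕ, Monotone m →
      MvPolynomial.eval (fun i => ((q : ℂ) ^ (m i))) P = 0) :
    P = 0 := by
  have key : MvPolynomial.rename (Fin.revPerm : Fin n ≃ Fin n) P = 0 := by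
    apply aux q hq0 hq1
    intro m hm
    rw [MvPolynomial.eval_rename]
    exact hvanish (m ∘ Fin.revPerm) (fun a b hab => hm (by simpa using Fin.rev_le_rev.mpr hab))
  have := congrArg (MvPolynomial.rename (Fin.revPerm : Fin n ≃ Fin n).symm) key
  rw [MvPolynomial.rename_rename, map_zero,
    show (⇑(Fin.revPerm : Fin n ≃ Fin n).symm ∘ ⇑(Fin.revPerm : Fin n ≃ Fin n)) = id from
      funext fun i => by simp, MvPolynomial.rename_id] at this
  exact this
end
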